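/- arXiv:2504.20573 — 4 statements merged into one kernel-verified Lean document; each statement's English description precedes it below -/
import Mathlib

section
/- For every positive integer k there exists a k-tree that is not odd (k+1)-colorable. Concretely, the k-tree G with vertex set {v₁,…,v_k} ∪ {u₀,u₁,…,u_k}, where {v₁,…,v_k,u₀} is a clique and for each j∈[k], N(u_j) = ({v_i : i∈[k], i≠j}) ∪ {u₀}, admits no odd (k+1)-coloring. -/
open SimpleGraph Finset
open scoped Classical

section Defs

variable {V : Type*}

/-- Degree of a vertex (classical, no decidability assumptions). -/
noncomputable def gdeg [Fintype V] (G : SimpleGraph V) (v : V) : ℕ :=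
  (Finset.univ.filter fun u => G.Adj v u).card

/-- Number of neighbors of `v` receiving color `c` under `φ`. -/
noncomputable def colorCount [Fintype V] (G : SimpleGraph V) {α : Type*} (φ : V → α)
    (v : V) (c : α) : ℕ :=
  (Finset.univ.filter fun u => G.Adj v u ∧ φ u = c).card

/-- `φ` is a proper coloring of `G`. -/
def ProperColoring (G : SimpleGraph V) {α : Type*} (φ : V → α) : Prop :=
  ∀ u w, G.Adj u w → φ u ≠ φ w

/-- Vertex `v` satisfies the odd condition w.r.t. `φ`. -/
def OddAt [Fintype V] (G : SimpleGraph V) {α : Type*} (φ : V → α) (v : V) : Prop :=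
  ∃ c, Odd (colorCount G φ v c)

/-- `φ` is an odd `m`-coloring of `G`. -/
def IsOddColoring [Fintype V] (G : SimpleGraph V) (m : ℕ) (φ : V → Fin m) : Prop :=
  ProperColoring G φ ∧ ∀ v : V, (∃ u, G.Adj v u) → OddAt G φ v

/-- `G` is odd `m`-colorable. -/
def OddColorable [Fintype V] (G : SimpleGraph V) (m : ℕ) : Prop :=
  ∃ φ : V → Fin m, IsOddColoring G m φ

/-- The identity ordering of `Fin n` is an addition ordering of `G` as a `k`-tree:
the first `k+1` vertices form a clique and every later vertex's earlier neighborhood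
is a clique of order `k`. -/
def IsAdditionOrdering {n : ℕ} (k : ℕ) (G : SimpleGraph (Fin n)) : Prop :=
  (∀ i j : Fin n, i.val < k + 1 → j.val < k + 1 → i ≠ j → G.Adj i j) ∧
  ∀ i : Fin n, k + 1 ≤ i.val →
    G.IsNClique k (Finset.univ.filter fun j => j < i ∧ G.Adj i j)

/-- `G` is a `k`-tree. -/
def IsKTree (k : ℕ) [Fintype V] (G : SimpleGraph V) : Prop :=
  k + 1 ≤ Fintype.card V ∧
  ∃ e : V ≃ Fin (Fintype.card V),
    IsAdditionOrdering k (SimpleGraph.comap (fun j => e.symm j) G)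

/-- The graph obtained from `G` by deleting the vertices in `S`
(the vertices of `S` are kept but become isolated). -/
def GraphDel (G : SimpleGraph V) (S : Set V) : SimpleGraph V where
  Adj x y := G.Adj x y ∧ x ∉ S ∧ y ∉ S
  symm := ⟨fun x y h => ⟨h.1.symm, h.2.2, h.2.1⟩⟩
  loopless := ⟨fun x h => G.irrefl h.1⟩

end Defs

/-- The relation generating the `k`-tree that is not odd `(k+1)`-colorable:
vertices are `v₁,…,v_k` (`Sum.inl`) and `u₀,u₁,…,u_k` (`Sum.inr`, index `0` is `u₀`,
index `j ≥ 1` is `u_j`). -/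
def badRel (k : ℕ) : Fin k ⊕ Fin (k + 1) → Fin k ⊕ Fin (k + 1) → Prop
  | Sum.inl _, Sum.inl _ => True
  | Sum.inl i, Sum.inr j => j.val = 0 ∨ i.val + 1 ≠ j.val
  | Sum.inr _, Sum.inl _ => False
  | Sum.inr j, Sum.inr _ => j.val = 0

/-- The `k`-tree with vertices `{v₁,…,v_k} ∪ {u₀,…,u_k}` where `{v₁,…,v_k,u₀}` is a
clique and `N(u_j) = {v_i : i ≠ j} ∪ {u₀}` for `j ∈ [k]`. -/
def badKTree (k : ℕ) : SimpleGraph (Fin k ⊕ Fin (k + 1)) :=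
  SimpleGraph.fromRel (badRel k)


/-! In a proper `(k + 1)`-coloring the clique `{v₁, …, v_k, u₀}` receives all `k + 1` colors.
Since `u_j` sees that whole clique except `v_j`, it must repeat the color of `v_j`. The neighbors
of `u₀` are exactly the pairs `v_j, u_j`, so `u₀` sees every color an even number of times.
The graph is a `k`-tree via the vertex order `v₁, …, v_k, u₀, u₁, …, u_k`. -/

open Sum

theorem isKTree_of_equiv {V : Type*} [Fintype V] {G : SimpleGraph V} {k n : ℕ} (e : V ≃ Fin n)
    (hn : k + 1 ≤ n) (h : IsAdditionOrdering k (G.comap e.symm)) : IsKTree k G := by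
  obtain rfl : Fintype.card V = n := by simpa using Fintype.card_congr e
  exact ⟨hn, e, h⟩

/-- With as many colors as the clique `s` has vertices, every color occurs on `s`. -/
theorem ProperColoring.eq_of_isNClique {V α : Type*} [Fintype α] {G : SimpleGraph V}
    {φ : V → α} (hφ : ProperColoring G φ) {s : Finset V} (hs : G.IsNClique (Fintype.card α) s)
    {x w : V} (hx : x ∈ s) (hw : ∀ y ∈ s, y ≠ x → G.Adj w y) : φ w = φ x := by
  have hinj : Set.InjOn φ s := fun y hy z hz hyz =>
    by_contra fun hne => hφ y z (hs.isClique hy hz hne) hyz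
  have himage : s.image φ = univ := eq_univ_of_card _ (by rw [card_image_of_injOn hinj, hs.card_eq])
  obtain ⟨y, hy, hyw⟩ := mem_image.1 (himage ▸ mem_univ (φ w))
  by_contra hne
  have hyx : y ≠ x := by rintro rfl; exact hne hyw.symm
  exact hφ w y (hw y hy hyx) hyw.symm

section BadKTree

variable {k : ℕ}

@[simp]
theorem badKTree_adj_inl_inl {i i' : Fin k} : (badKTree k).Adj (inl i) (inl i') ↔ i ≠ i' := by
  rw [badKTree, fromRel_adj]; simp [badRel]

@[simp]
theorem badKTree_adj_inl_inr {i : Fin k} {j : Fin (k + 1)} :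
    (badKTree k).Adj (inl i) (inr j) ↔ j = 0 ∨ j ≠ i.succ := by
  rw [badKTree, fromRel_adj]
  simp only [badRel, ne_eq, Fin.ext_iff, Fin.val_succ, Fin.val_zero, reduceCtorEq,
    not_false_eq_true, or_false, true_and]
  omega

@[simp]
theorem badKTree_adj_inr_inl {i : Fin k} {j : Fin (k + 1)} :
    (badKTree k).Adj (inr j) (inl i) ↔ j = 0 ∨ j ≠ i.succ := by
  rw [adj_comm, badKTree_adj_inl_inr]

@[simp]
theorem badKTree_adj_inr_inr {j j' : Fin (k + 1)} :
    (badKTree k).Adj (inr j) (inr j') ↔ j ≠ j' ∧ (j = 0 ∨ j' = 0) := by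
  rw [badKTree, fromRel_adj]; simp [badRel]

/-- Position `i < k` is `v_{i+1}`, position `k + j` is `u_j`; so `u_j` (`j ≥ 1`) misses exactly
the earlier vertex `v_j`, at distance `k + 1`. -/
theorem badKTree_comap_adj (a b : Fin (k + (k + 1))) :
    ((badKTree k).comap finSumFinEquiv.symm).Adj a b ↔
      a ≠ b ∧ (a.val ≤ k ∨ b.val ≤ k) ∧ a.val ≠ b.val + k + 1 ∧ b.val ≠ a.val + k + 1 := by
  obtain ⟨x, rfl⟩ := finSumFinEquiv.surjective a
  obtain ⟨y, rfl⟩ := finSumFinEquiv.surjective b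
  rw [comap_adj, Equiv.symm_apply_apply, Equiv.symm_apply_apply]
  rcases x with ⟨i, hi⟩ | ⟨j, hj⟩ <;> rcases y with ⟨i', hi'⟩ | ⟨j', hj'⟩ <;>
    simp only [badKTree_adj_inl_inl, badKTree_adj_inl_inr, badKTree_adj_inr_inl,
      badKTree_adj_inr_inr, ne_eq, Fin.ext_iff, finSumFinEquiv_apply_left,
      finSumFinEquiv_apply_right, Fin.val_succ, Fin.val_zero, Fin.val_castAdd, Fin.val_natAdd] <;>
    omega

theorem isAdditionOrdering_badKTree :
    IsAdditionOrdering k ((badKTree k).comap finSumFinEquiv.symm) := by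
  refine ⟨fun i j hi hj hij => ?_, fun i hi => ?_⟩
  · rw [badKTree_comap_adj]
    have := Fin.val_ne_of_ne hij
    omega
  · suffices hclique : ((badKTree k).comap finSumFinEquiv.symm).IsNClique k
        ((Iic (⟨k, by omega⟩ : Fin (k + (k + 1)))).erase ⟨i - (k + 1), by omega⟩) by
      convert hclique using 1
      ext j
      simp only [mem_filter, mem_univ, true_and, badKTree_comap_adj, mem_erase, mem_Iic,
        ne_eq, Fin.ext_iff, Fin.lt_def, Fin.le_def]
      omega
    rw [isNClique_iff, card_erase_of_mem (by simp [Fin.le_def]), Fin.card_Iic]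
    refine ⟨fun a ha b hb hab => ?_, rfl⟩
    simp only [coe_erase, coe_Iic, Set.mem_sdiff, Set.mem_Iic, Fin.le_def] at ha hb
    rw [badKTree_comap_adj]
    have := Fin.val_ne_of_ne hab
    omega

theorem isKTree_badKTree (k : ℕ) : IsKTree k (badKTree k) :=
  isKTree_of_equiv finSumFinEquiv (by omega) isAdditionOrdering_badKTree

theorem badKTree_isNClique :
    (badKTree k).IsNClique (k + 1) (insert (inr 0) (univ.map .inl)) := by
  rw [isNClique_iff, card_insert_of_notMem (by simp), card_map, card_fin]
  refine ⟨?_, rfl⟩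
  rintro x hx y hy hxy
  simp only [coe_insert, coe_map, coe_univ, Set.image_univ, Set.mem_insert_iff,
    Set.mem_range] at hx hy
  rcases hx with rfl | ⟨i, rfl⟩ <;> rcases hy with rfl | ⟨i', rfl⟩ <;> simp_all

theorem ProperColoring.badKTree_twin {φ : Fin k ⊕ Fin (k + 1) → Fin (k + 1)}
    (hφ : ProperColoring (badKTree k) φ) (i : Fin k) : φ (inr i.succ) = φ (inl i) :=
  hφ.eq_of_isNClique (by simpa using badKTree_isNClique) (by simp) fun y hy hyi => by
    simp only [mem_insert, mem_map, mem_univ, true_and] at hy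
    rcases hy with rfl | ⟨i', rfl⟩
    · simp
    · simpa [eq_comm] using hyi

theorem colorCount_badKTree_inr_zero {φ : Fin k ⊕ Fin (k + 1) → Fin (k + 1)}
    (hφ : ProperColoring (badKTree k) φ) (c : Fin (k + 1)) :
    colorCount (badKTree k) φ (inr 0) c = 2 * #{i | φ (inl i) = c} := by
  set A : Finset (Fin k) := {i | φ (inl i) = c}
  have hneighbors : ({u | (badKTree k).Adj (inr 0) u ∧ φ u = c} : Finset _) =
      A.disjSum (A.map (Fin.succEmb k)) := by
    ext (i | j)
    · simp [A]
    · cases j using Fin.cases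
      · simp
      · simp [A, hφ.badKTree_twin, (Fin.succ_ne_zero _).symm]
  calc colorCount (badKTree k) φ (inr 0) c = #(A.disjSum (A.map (Fin.succEmb k))) := by
        -- the two filters differ only in their decidability instances
        rw [← hneighbors, colorCount]; convert rfl
    _ = 2 * #A := by rw [card_disjSum, card_map, two_mul]

theorem not_oddColorable_badKTree (hk : 1 ≤ k) : ¬ OddColorable (badKTree k) (k + 1) := by
  rintro ⟨φ, hφ, hodd⟩
  obtain ⟨c, hc⟩ := hodd (inr 0) ⟨inl ⟨0, hk⟩, by simp⟩
  rw [colorCount_badKTree_inr_zero hφ] at hc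
  exact Nat.not_odd_iff_even.2 (even_two_mul _) hc

end BadKTree

/-- For every positive `k` there is a `k`-tree (the concrete graph
`badKTree k`) that is not odd `(k+1)`-colorable. -/
theorem exists_ktree_not_odd_succ_colorable (k : ℕ) (hk : 1 ≤ k) :
    IsKTree k (badKTree k) ∧ ¬ OddColorable (badKTree k) (k + 1) :=
  ⟨isKTree_badKTree k, not_oddColorable_badKTree hk⟩
end

section
/- Let k be a positive integer, G a k-tree with addition ordering v₁,…,vₙ, and let B be the branch B(V_i, v_i) where V_i = N_G(v_i) ∩ {v_j : j < i}. If u₀,…,u_s is the ordering of V(B)∖V_i induced from the addition ordering, then for every j∈[s], |V_i ∩ ⋂_{ℓ=1}^{j} N_B(u_ℓ)| ≥ |V_i ∩ ⋂_{ℓ=1}^{j−1} N_B(u_ℓ)| − 1. -/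
open SimpleGraph Finset
open scoped Classical

section Defs
variable {V : Type*}

/-- `H` is a minor of `G`, via disjoint connected branch sets. -/
def IsMinorOf {W : Type*} (H : SimpleGraph W) (G : SimpleGraph V) : Prop :=
  ∃ f : W → Set V,
    (∀ w, (f w).Nonempty) ∧
    (∀ w, (G.induce (f w)).Connected) ∧
    (Pairwise fun w w' => Disjoint (f w) (f w')) ∧
    (∀ ⦃w w'⦄, H.Adj w w' → ∃ a ∈ f w, ∃ b ∈ f w', G.Adj a b)

/-- `G` is `d`-degenerate: every nonempty (induced) subgraph has a vertex of degree at most `d`. -/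
def DegenerateLE (G : SimpleGraph V) (d : ℕ) : Prop :=
  ∀ s : Finset V, s.Nonempty → ∃ v ∈ s, (s.filter fun u => G.Adj v u).card ≤ d

/-- `G` is outerplanar iff it has no `K₄` minor and no `K_{2,3}` minor. -/
def Outerplanar (G : SimpleGraph V) : Prop :=
  ¬ IsMinorOf (completeGraph (Fin 4)) G ∧
  ¬ IsMinorOf (completeBipartiteGraph (Fin 2) (Fin 3)) G

/-- `G` has tree-width at most `k`, via tree decompositions. -/
def TreewidthAtMost [Fintype V] (G : SimpleGraph V) (k : ℕ) : Prop :=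
  ∃ (n : ℕ) (T : SimpleGraph (Fin n)) (X : Fin n → Finset V),
    T.IsTree ∧
    (∀ v : V, ∃ i, v ∈ X i) ∧
    (∀ u v : V, G.Adj u v → ∃ i, u ∈ X i ∧ v ∈ X i) ∧
    (∀ v : V, (T.induce {i | v ∈ X i}).Connected) ∧
    (∀ i, (X i).card ≤ k + 1)

/-- The root clique `V_i` of the branch at `v_i`: earlier neighbors of `v_i`. -/
noncomputable def rootClique {n : ℕ} (G : SimpleGraph (Fin n)) (i : Fin n) : Finset (Fin n) :=
  Finset.univ.filter fun j => j < i ∧ G.Adj i j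

/-- Vertices of the branch `B(V_i, v_i)` outside the root clique: vertices reachable
from `v_i` by walks avoiding `V_i`. -/
def branchSet {n : ℕ} (G : SimpleGraph (Fin n)) (i : Fin n) : Set (Fin n) :=
  {x | x ∉ rootClique G i ∧ ∃ p : G.Walk i x, ∀ y ∈ p.support, y ∉ rootClique G i}
end Defs

/-!
Walks in a `k`-tree can be pushed down: the earlier neighbours of the latest vertex of a walk
form a clique, so that vertex can be bypassed unless it is an endpoint. Hence every vertex of
the branch at `i` comes after `i`, and every later branch vertex `u` has an earlier neighbour
in the branch. Let `y` be the latest one; every other earlier neighbour of `u` is adjacent to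
`y` and earlier than it, so `V_u ⊆ {y} ∪ V_y`, and as `|V_u| = |V_y| = k` at most one vertex of
`V_y` misses `V_u`. A root vertex adjacent to all branch vertices before `u` lies in `V_y`,
so all but at most one of them are adjacent to `u` as well.
-/

lemma Finset.card_sdiff_le_one_of_subset_insert {α : Type*} [DecidableEq α] {s t : Finset α}
    {a : α} (h : s ⊆ insert a t) (hts : #t ≤ #s) : #(t \ s) ≤ 1 := by
  have := card_le_card (sdiff_subset_sdiff (subset_insert a t) (le_refl s))
  rw [card_sdiff_of_subset h] at this
  have := card_insert_le a t
  omega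

lemma SimpleGraph.Reachable.exists_adj_of_ne {V : Type*} {G : SimpleGraph V} {u v : V}
    (h : G.Reachable u v) (hne : u ≠ v) : ∃ w, G.Adj u w :=
  h.elim fun p => ⟨_, p.adj_snd (Walk.not_nil_of_ne hne)⟩

section GraphDel

variable {V : Type*} {G : SimpleGraph V}

lemma graphDel_anti {S T : Set V} (h : S ⊆ T) : GraphDel G T ≤ GraphDel G S :=
  fun _ _ hxy => ⟨hxy.1, fun hx => hxy.2.1 (h hx), fun hy => hxy.2.2 (h hy)⟩

lemma graphDel_graphDel (S T : Set V) : GraphDel (GraphDel G S) T = GraphDel G (S ∪ T) := by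
  ext x y
  simp only [GraphDel, Set.mem_union]
  tauto

lemma reachable_graphDel_iff_exists_walk {S : Set V} {a b : V} (ha : a ∉ S) :
    (GraphDel G S).Reachable a b ↔ ∃ p : G.Walk a b, ∀ y ∈ p.support, y ∉ S := by
  constructor
  · rintro ⟨p⟩
    induction p with
    | nil => exact ⟨.nil, by simpa using ha⟩
    | cons hxy _ ih =>
      obtain ⟨q, hq⟩ := ih hxy.2.2
      exact ⟨.cons hxy.1 q, by simpa using ⟨ha, hq⟩⟩
  · rintro ⟨p, hp⟩
    induction p with
    | nil => rfl
    | cons hxy q ih =>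
      simp only [Walk.support_cons, List.mem_cons, forall_eq_or_imp] at hp
      have hc := hp.2 _ q.start_mem_support
      exact (show (GraphDel G S).Adj _ _ from ⟨hxy, hp.1, hc⟩).reachable.trans (ih hc hp.2)

lemma reachable_graphDel_singleton {H : SimpleGraph V} {m x y : V}
    (hm : H.IsClique (H.neighborSet m)) (hx : x ≠ m) (hy : y ≠ m) (h : H.Reachable x y) :
    (GraphDel H {m}).Reachable x y := by
  -- A walk that starts at `m` may be rerouted to start at any neighbour of `m`.
  suffices ∀ {a} (p : H.Walk a y) x', x' ≠ m → (x' = a ∨ a = m ∧ H.Adj m x') →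
      (GraphDel H {m}).Reachable x' y from h.elim fun p => this p x hx (.inl rfl)
  clear h
  intro a p
  induction p with
  | nil => rintro x' hx' (rfl | ⟨rfl, -⟩); exacts [.rfl, absurd rfl hy]
  | @cons a c b hac _ ih =>
    have step : ∀ {x'}, x' ≠ m → H.Adj x' c → c ≠ m → (GraphDel H {m}).Reachable x' b :=
      fun hx' hx'c hc => (show (GraphDel H {m}).Adj _ _ from ⟨hx'c, hx', hc⟩).reachable.trans
        (ih hy c hc (.inl rfl))
    rintro x' hx' (rfl | ⟨ham, hmx'⟩)
    · by_cases hc : c = m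
      · exact ih hy x' hx' (.inr ⟨hc, hc ▸ hac.symm⟩)
      · exact step hx' hac hc
    · rw [ham] at hac
      have hc : c ≠ m := hac.ne'
      obtain rfl | hx'c := eq_or_ne x' c
      · exact ih hy x' hc (.inl rfl)
      · exact step hx' (hm hmx' hac hx'c) hc

end GraphDel

section Ordering

variable {n k : ℕ} {G : SimpleGraph (Fin n)}

lemma mem_rootClique {i a : Fin n} : a ∈ rootClique G i ↔ a < i ∧ G.Adj i a := by
  simp [rootClique]

lemma notMem_rootClique_self (i : Fin n) : i ∉ rootClique G i := fun h =>
  (mem_rootClique.1 h).1.false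

lemma reachable_graphDel_union_of_isUpperSet {S : Set (Fin n)} (U : Finset (Fin n))
    (hU : IsUpperSet (U : Set (Fin n))) (hclique : ∀ m ∈ U, G.IsClique (rootClique G m))
    {a b : Fin n} (ha : a ∉ U) (hb : b ∉ U) (h : (GraphDel G S).Reachable a b) :
    (GraphDel G (S ∪ U)).Reachable a b := by
  induction U using Finset.induction_on_min with
  | empty => simpa using h
  | insert m U hmU ih =>
    have hUm : ∀ ⦃x⦄, m ≤ x → x ∈ insert m U := fun x hmx => hU hmx (by simp)
    have hU' : IsUpperSet (U : Set (Fin n)) := fun x y hxy hx => by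
      simpa [((hmU x hx).trans_le hxy).ne'] using hUm ((hmU x hx).le.trans hxy)
    have hreach := ih hU' (fun x hx => hclique x (mem_insert_of_mem hx))
      (fun h => ha (mem_insert_of_mem h)) (fun h => hb (mem_insert_of_mem h))
    rw [coe_insert, Set.union_insert, ← Set.union_singleton, ← graphDel_graphDel]
    -- Every surviving neighbour of `m` lies below `m`, hence in the clique `rootClique G m`.
    have hnbr : ∀ ⦃x⦄, (GraphDel G (S ∪ U)).Adj m x → x ∈ rootClique G m := fun x hx =>
      mem_rootClique.2 ⟨lt_of_not_ge fun hmx => hx.2.2 (.inr (by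
        simpa [hx.1.ne'] using hUm hmx)), hx.1⟩
    refine reachable_graphDel_singleton (fun x hx z hz hxz => ?_)
      (fun h => ha (h ▸ mem_insert_self m U)) (fun h => hb (h ▸ mem_insert_self m U)) hreach
    exact ⟨hclique m (mem_insert_self m U) (hnbr hx) (hnbr hz) hxz, hx.2.2, hz.2.2⟩

lemma IsAdditionOrdering.isNClique_rootClique (hG : IsAdditionOrdering k G) {m : Fin n}
    (hm : k + 1 ≤ m.val) : G.IsNClique k (rootClique G m) :=
  hG.2 m hm

end Ordering

section Branch

variable {n k : ℕ} {G : SimpleGraph (Fin n)}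

lemma mem_branchSet_iff {i x : Fin n} :
    x ∈ branchSet G i ↔
      x ∉ rootClique G i ∧ (GraphDel G (rootClique G i)).Reachable i x := by
  rw [reachable_graphDel_iff_exists_walk (by exact_mod_cast notMem_rootClique_self i)]
  rfl

lemma mem_branchSet_of_adj {i z w : Fin n} (hz : z ∈ branchSet G i) (hzw : G.Adj z w)
    (hw : w ∉ rootClique G i) : w ∈ branchSet G i := by
  obtain ⟨hz, hiz⟩ := mem_branchSet_iff.1 hz
  have hzw : (GraphDel G (rootClique G i)).Adj z w := ⟨hzw, hz, hw⟩
  exact mem_branchSet_iff.2 ⟨hw, hiz.trans hzw.reachable⟩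

lemma IsAdditionOrdering.reachable_graphDel_union_Ioi (hG : IsAdditionOrdering k G)
    {S : Set (Fin n)} {a b : Fin n} (hab : k + 1 ≤ (max a b).val)
    (h : (GraphDel G S).Reachable a b) :
    (GraphDel G (S ∪ Set.Ioi (max a b))).Reachable a b := by
  simpa using reachable_graphDel_union_of_isUpperSet (Finset.Ioi (max a b))
    (by simpa using isUpperSet_Ioi (a := max a b))
    (fun m hm => (hG.isNClique_rootClique (hab.trans (mem_Ioi.1 hm).le)).isClique)
    (by simp) (by simp) h

lemma mem_rootClique_of_adj_graphDel_union_Ioi {S : Set (Fin n)} {m w : Fin n}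
    (h : (GraphDel G (S ∪ Set.Ioi m)).Adj m w) : w ∈ rootClique G m ∧ w ∉ S :=
  ⟨mem_rootClique.2 ⟨lt_of_le_of_ne (not_lt.1 fun hmw => h.2.2 (.inr hmw)) h.1.ne', h.1⟩,
    fun hw => h.2.2 (.inl hw)⟩

lemma le_of_mem_branchSet (hG : IsAdditionOrdering k G) {i y : Fin n} (hi : k + 1 ≤ i.val)
    (hy : y ∈ branchSet G i) : i ≤ y := by
  by_contra! hyi
  have hmax : max i y = i := max_eq_left hyi.le
  have hreach := hG.reachable_graphDel_union_Ioi (by rwa [hmax]) (mem_branchSet_iff.1 hy).2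
  rw [hmax] at hreach
  obtain ⟨w, hw⟩ := hreach.exists_adj_of_ne hyi.ne'
  obtain ⟨hwi, hwi'⟩ := mem_rootClique_of_adj_graphDel_union_Ioi hw
  exact hwi' hwi

lemma exists_mem_branchSet_mem_rootClique (hG : IsAdditionOrdering k G) {i u : Fin n}
    (hi : k + 1 ≤ i.val) (hu : u ∈ branchSet G i) (hiu : i < u) :
    ∃ y ∈ rootClique G u, y ∈ branchSet G i := by
  have hmax : max i u = u := max_eq_right hiu.le
  have hreach :=
    hG.reachable_graphDel_union_Ioi (by rw [hmax]; omega) (mem_branchSet_iff.1 hu).2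
  rw [hmax] at hreach
  obtain ⟨y, hy⟩ := hreach.symm.exists_adj_of_ne hiu.ne'
  obtain ⟨hyu, hyi⟩ := mem_rootClique_of_adj_graphDel_union_Ioi hy
  have hiy := (hreach.trans hy.reachable).mono (graphDel_anti Set.subset_union_left)
  exact ⟨y, hyu, mem_branchSet_iff.2 ⟨hyi, hiy⟩⟩

lemma rootClique_subset_insert_rootClique (hG : IsAdditionOrdering k G) {i u y : Fin n}
    (hi : k + 1 ≤ i.val) (hu : u ∈ branchSet G i) (hiu : i < u) (hyu : y ∈ rootClique G u)
    (hy : y ∈ branchSet G i)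
    (hy_max : ∀ z ∈ rootClique G u, z ∈ branchSet G i → z ≤ y) :
    rootClique G u ⊆ insert y (rootClique G y) := by
  intro z hzu
  obtain rfl | hzy := eq_or_ne z y
  · exact mem_insert_self z _
  have hyz : G.Adj y z := (hG.isNClique_rootClique (by omega)).isClique hyu hzu hzy.symm
  have hzy : z < y := by
    by_cases hzi : z ∈ rootClique G i
    · exact (mem_rootClique.1 hzi).1.trans_le (le_of_mem_branchSet hG hi hy)
    · exact (hy_max z hzu (mem_branchSet_of_adj hu (mem_rootClique.1 hzu).2 hzi)).lt_of_ne hzy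
  exact mem_insert_of_mem (mem_rootClique.2 ⟨hzy, hyz⟩)

lemma exists_mem_branchSet_rootClique_subset_insert (hG : IsAdditionOrdering k G)
    {i u : Fin n} (hi : k + 1 ≤ i.val) (hu : u ∈ branchSet G i) (hiu : i < u) :
    ∃ y ∈ rootClique G u, y ∈ branchSet G i ∧
      rootClique G u ⊆ insert y (rootClique G y) := by
  have hne : ((rootClique G u).filter (· ∈ branchSet G i)).Nonempty := by
    obtain ⟨y, hyu, hy⟩ := exists_mem_branchSet_mem_rootClique hG hi hu hiu
    exact ⟨y, mem_filter.2 ⟨hyu, hy⟩⟩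
  obtain ⟨y, hyF, hy_max⟩ := Finset.exists_max_image _ id hne
  obtain ⟨hyu, hy⟩ := mem_filter.1 hyF
  exact ⟨y, hyu, hy, rootClique_subset_insert_rootClique hG hi hu hiu hyu hy
    fun z hzu hz => hy_max z (mem_filter.2 ⟨hzu, hz⟩)⟩

end Branch

theorem branch_common_neighbors_decrease_general {n k : ℕ}
    (G : SimpleGraph (Fin n)) (hG : IsAdditionOrdering k G)
    (i : Fin n) (hi : k + 1 ≤ i.val) (u : Fin n)
    (hu : u ∈ branchSet G i) (hiu : i < u) :
    ((rootClique G i).filter fun w =>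
        ∀ x : Fin n, x ∈ branchSet G i → i < x → x ≤ u → G.Adj x w).card + 1 ≥
    ((rootClique G i).filter fun w =>
        ∀ x : Fin n, x ∈ branchSet G i → i < x → x < u → G.Adj x w).card := by
  set B := (rootClique G i).filter fun w =>
    ∀ x : Fin n, x ∈ branchSet G i → i < x → x ≤ u → G.Adj x w
  set A := (rootClique G i).filter fun w =>
    ∀ x : Fin n, x ∈ branchSet G i → i < x → x < u → G.Adj x w
  obtain ⟨y, hyu, hy, hsub⟩ := exists_mem_branchSet_rootClique_subset_insert hG hi hu hiu
  have hiy := le_of_mem_branchSet hG hi hy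
  have hAB : A \ B ⊆ rootClique G y \ rootClique G u := fun w hw => by
    obtain ⟨hwA, hwB⟩ := mem_sdiff.1 hw
    obtain ⟨hwi, hwA⟩ := mem_filter.1 hwA
    refine mem_sdiff.2 ⟨?_, fun hwu => hwB (mem_filter.2 ⟨hwi, fun x hx hix hxu => ?_⟩)⟩
    · obtain rfl | hiy := hiy.eq_or_lt
      · exact hwi
      · exact mem_rootClique.2
          ⟨(mem_rootClique.1 hwi).1.trans hiy, hwA y hy hiy (mem_rootClique.1 hyu).1⟩
    · obtain hxu | rfl := hxu.lt_or_eq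
      · exact hwA x hx hix hxu
      · exact (mem_rootClique.1 hwu).2
  have hyu_card : #(rootClique G y \ rootClique G u) ≤ 1 :=
    card_sdiff_le_one_of_subset_insert hsub
      (by rw [(hG.isNClique_rootClique (by omega)).2, (hG.isNClique_rootClique (by omega)).2])
  calc #A ≤ #(A \ B) + #B := card_le_card_sdiff_add_card
    _ ≤ #B + 1 := by have := card_le_card hAB; omega

/-- In a branch of a `k`-tree, the number of common neighbors in the root
clique of an initial segment of branch vertices decreases by at most one at each step. -/
theorem branch_common_neighbors_decrease {n k : ℕ} (hk : 1 ≤ k)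
    (G : SimpleGraph (Fin n)) (hG : IsAdditionOrdering k G)
    (i : Fin n) (hi : k + 1 ≤ i.val) (u : Fin n)
    (hu : u ∈ branchSet G i) (hiu : i < u) :
    ((rootClique G i).filter fun w =>
        ∀ x : Fin n, x ∈ branchSet G i → i < x → x ≤ u → G.Adj x w).card + 1 ≥
    ((rootClique G i).filter fun w =>
        ∀ x : Fin n, x ∈ branchSet G i → i < x → x < u → G.Adj x w).card :=
  branch_common_neighbors_decrease_general G hG i hi u hu hiu
end

section
/- Extension lemma for 3-trees: Let G be a 3-tree with a branch B = B({v₁,v₂,v₃},u₀) that is an ear, a one-hat, or a one-hat plus, and let G' = G − (V(B)∖{v₁,v₂,v₃}). If G' admits an odd 5-coloring φ', then for any index i ∈ {1,2,3}, φ' extends to a proper 5-coloring of G such that every vertex outside {v_i, v_{i+1}} satisfies the odd condition (indices mod 3). Moreover, if B is a one-hat or a one-hat plus, φ' extends so that every vertex except possibly v_i satisfies the odd condition. -/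
/-!
Only the internal vertices `S` of the branch are recoloured, so every vertex with no neighbour in
`S` stays odd, and only `S` and the triangle `v₁v₂v₃` need care. The vertices of `S` get colours
under which one of their neighbours has a colour of its own. A triangle vertex `x` sees its old
colour counts plus the multiset `L` of colours it meets in `S`, and these sums are all even for
at most one parity class of `L`. So of two colourings of `S` that show `x` multisets of different
parity, one keeps `x` odd, and among three pairwise different ones, one keeps two given vertices
odd. In every branch the colours of `S` are found by a short sequence of such choices. The
definitions allow the degenerate case `u₁ = v₃`, in which `S` contains `v₃` (and, for a
one-hat plus, is a whole `K₄` component); there `S` is coloured directly.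
-/

open SimpleGraph Finset
open scoped Classical

section Defs
variable {V : Type*}

/-- An ear of a 2-tree over the edge `{v₁,v₂}`. -/
def IsEar2 (G : SimpleGraph V) (v₁ v₂ u₀ : V) : Prop :=
  G.Adj v₁ v₂ ∧ G.neighborSet u₀ = {v₁, v₂}

/-- A hat of a 2-tree over the edge `{v₁,v₂}`. -/
def IsHat2 (G : SimpleGraph V) (v₁ v₂ u₀ u₁ u₂ : V) : Prop :=
  G.Adj v₁ v₂ ∧ G.neighborSet u₀ = {v₁, v₂, u₁, u₂} ∧
  G.neighborSet u₁ = {v₁, u₀} ∧ G.neighborSet u₂ = {v₂, u₀}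

/-- A double hat of a 2-tree over the edge `{v₁,v₂}`. -/
def IsDoubleHat2 (G : SimpleGraph V) (v₁ v₂ u₀ u₁ u₂ u₃ u₄ u₅ u₆ : V) : Prop :=
  G.Adj v₁ v₂ ∧
  G.neighborSet u₀ = {v₁, v₂, u₁, u₂, u₄, u₅} ∧
  G.neighborSet u₁ = {v₁, u₀, u₃, u₄} ∧
  G.neighborSet u₂ = {v₂, u₀, u₅, u₆} ∧
  G.neighborSet u₃ = {v₁, u₁} ∧ G.neighborSet u₄ = {u₀, u₁} ∧
  G.neighborSet u₅ = {u₀, u₂} ∧ G.neighborSet u₆ = {v₂, u₂}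

/-- The branch over the edge `{a,b}` with apex `u` is an ear, a hat, or a double hat. -/
def SpecialBranch2 (G : SimpleGraph V) (a b u : V) : Prop :=
  IsEar2 G a b u ∨ (∃ x y, IsHat2 G a b u x y) ∨
  ∃ x₁ x₂ x₃ x₄ x₅ x₆, IsDoubleHat2 G a b u x₁ x₂ x₃ x₄ x₅ x₆

/-- `|N(u₀) ∩ N(a)| ≤ 1`. -/
def Side2Small (G : SimpleGraph V) (a u₀ : V) : Prop :=
  (G.neighborSet u₀ ∩ G.neighborSet a).Subsingleton

/-- `N(u₀) ∩ N(a) = {b, u}` with `B({a,u₀},u)` an ear, hat or double hat. -/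
def Side2Branch (G : SimpleGraph V) (a b u₀ : V) : Prop :=
  ∃ u, b ≠ u ∧ G.neighborSet u₀ ∩ G.neighborSet a = {b, u} ∧ SpecialBranch2 G a u₀ u

/-- Membership of the branch `B({v₁,v₂},u₀)` in `𝓗⁽²⁾(G)`. -/
def InH2 (G : SimpleGraph V) (v₁ v₂ u₀ : V) : Prop :=
  G.Adj v₁ v₂ ∧ G.Adj v₁ u₀ ∧ G.Adj v₂ u₀ ∧
  (Side2Small G v₁ u₀ ∨ Side2Branch G v₁ v₂ u₀) ∧
  (Side2Small G v₂ u₀ ∨ Side2Branch G v₂ v₁ u₀) ∧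
  (Side2Branch G v₁ v₂ u₀ ∨ Side2Branch G v₂ v₁ u₀)

/-- Membership of a pair of special branches over the edge `{v₁,v₂}` in `𝓣⁽²⁾(G)`. -/
def InT2 (G : SimpleGraph V) (v₁ v₂ : V) : Prop :=
  ∃ u₀ w₀, u₀ ≠ w₀ ∧ SpecialBranch2 G v₁ v₂ u₀ ∧ SpecialBranch2 G v₁ v₂ w₀

/-- An ear of a 3-tree over the triangle `{v₁,v₂,v₃}`. -/
def IsEar3 (G : SimpleGraph V) (v₁ v₂ v₃ u₀ : V) : Prop :=
  G.Adj v₁ v₂ ∧ G.Adj v₂ v₃ ∧ G.Adj v₁ v₃ ∧ G.neighborSet u₀ = {v₁, v₂, v₃}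

/-- A one-hat of a 3-tree over the triangle `{v₁,v₂,v₃}`. -/
def IsOneHat3 (G : SimpleGraph V) (v₁ v₂ v₃ u₀ u₁ : V) : Prop :=
  G.Adj v₁ v₂ ∧ G.Adj v₂ v₃ ∧ G.Adj v₁ v₃ ∧
  G.neighborSet u₀ = {v₁, v₂, v₃, u₁} ∧ G.neighborSet u₁ = {v₁, v₂, u₀}

/-- A one-hat plus of a 3-tree over the triangle `{v₁,v₂,v₃}`. -/
def IsOneHatPlus3 (G : SimpleGraph V) (v₁ v₂ v₃ u₀ u₁ u₂ u₃ : V) : Prop :=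
  G.Adj v₁ v₂ ∧ G.Adj v₂ v₃ ∧ G.Adj v₁ v₃ ∧
  G.neighborSet u₀ = {v₁, v₂, v₃, u₁, u₂, u₃} ∧
  G.neighborSet u₁ = {v₁, v₂, u₀, u₃} ∧
  G.neighborSet u₂ = {v₂, v₃, u₀} ∧
  G.neighborSet u₃ = {v₁, u₀, u₁}

/-- The branch over the (unordered) triangle `{a,b,c}` with apex `u` is a one-hat. -/
def IsOneHatBranch3 (G : SimpleGraph V) (a b c u : V) : Prop :=
  ∃ x, IsOneHat3 G a b c u x ∨ IsOneHat3 G b c a u x ∨ IsOneHat3 G c a b u x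

/-- The branch over the (unordered) triangle `{a,b,c}` with apex `u` is a one-hat plus. -/
def IsOneHatPlusBranch3 (G : SimpleGraph V) (a b c u : V) : Prop :=
  ∃ x₁ x₂ x₃,
    IsOneHatPlus3 G a b c u x₁ x₂ x₃ ∨ IsOneHatPlus3 G b c a u x₁ x₂ x₃ ∨
    IsOneHatPlus3 G c a b u x₁ x₂ x₃ ∨ IsOneHatPlus3 G a c b u x₁ x₂ x₃ ∨
    IsOneHatPlus3 G b a c u x₁ x₂ x₃ ∨ IsOneHatPlus3 G c b a u x₁ x₂ x₃

/-- The branch over the triangle `{a,b,c}` with apex `u` is an ear, one-hat or one-hat plus. -/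
def SpecialBranch3 (G : SimpleGraph V) (a b c u : V) : Prop :=
  IsEar3 G a b c u ∨ IsOneHatBranch3 G a b c u ∨ IsOneHatPlusBranch3 G a b c u

/-- `|N(u₀) ∩ N(a) ∩ N(b)| ≤ 1`. -/
def Side3Small (G : SimpleGraph V) (a b u₀ : V) : Prop :=
  (G.neighborSet u₀ ∩ G.neighborSet a ∩ G.neighborSet b).Subsingleton

/-- `N(u₀) ∩ N(a) ∩ N(b) = {c, u}` with `B({a,b,u₀},u)` an ear, one-hat or one-hat plus. -/
def Side3Branch (G : SimpleGraph V) (a b c u₀ : V) : Prop :=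
  ∃ u, c ≠ u ∧ G.neighborSet u₀ ∩ G.neighborSet a ∩ G.neighborSet b = {c, u} ∧
    SpecialBranch3 G a b u₀ u

/-- Membership of the branch `B({v₁,v₂,v₃},u₀)` in `𝓗⁽³⁾(G)`. -/
def InH3 (G : SimpleGraph V) (v₁ v₂ v₃ u₀ : V) : Prop :=
  G.Adj v₁ v₂ ∧ G.Adj v₂ v₃ ∧ G.Adj v₁ v₃ ∧
  G.Adj v₁ u₀ ∧ G.Adj v₂ u₀ ∧ G.Adj v₃ u₀ ∧
  (Side3Small G v₁ v₂ u₀ ∨ Side3Branch G v₁ v₂ v₃ u₀) ∧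
  (Side3Small G v₂ v₃ u₀ ∨ Side3Branch G v₂ v₃ v₁ u₀) ∧
  (Side3Small G v₃ v₁ u₀ ∨ Side3Branch G v₃ v₁ v₂ u₀) ∧
  (Side3Branch G v₁ v₂ v₃ u₀ ∨ Side3Branch G v₂ v₃ v₁ u₀ ∨ Side3Branch G v₃ v₁ v₂ u₀)

/-- Membership of a pair of special branches over the triangle `{v₁,v₂,v₃}` in `𝓣⁽³⁾(G)`. -/
def InT3 (G : SimpleGraph V) (v₁ v₂ v₃ : V) : Prop :=
  ∃ u₀ w₀, u₀ ≠ w₀ ∧ SpecialBranch3 G v₁ v₂ v₃ u₀ ∧ SpecialBranch3 G v₁ v₂ v₃ w₀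
end Defs

section Parity

variable {α : Type*} [DecidableEq α]

def OddAfter (n : α → ℕ) (L : Multiset α) : Prop :=
  ∃ c, Odd (n c + L.count c)

def ParityNe (L L' : Multiset α) : Prop :=
  ∃ c, Odd (L.count c + L'.count c)

theorem oddAfter_or_oddAfter (n : α → ℕ) {L L' : Multiset α} (h : ParityNe L L') :
    OddAfter n L ∨ OddAfter n L' := by
  obtain ⟨c, hc⟩ := h
  refine or_iff_not_imp_left.mpr fun hL => ⟨c, ?_⟩
  have hL : Even (n c + L.count c) := Nat.not_odd_iff_even.mp (not_exists.mp hL c)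
  obtain ⟨k, hk⟩ := hL
  obtain ⟨j, hj⟩ := hc
  exact ⟨k + j - L.count c, by omega⟩

theorem parityNe_cons_cons {x y : α} (hxy : x ≠ y) (M : Multiset α) :
    ParityNe (x ::ₘ M) (y ::ₘ M) :=
  ⟨x, by simp [hxy]⟩

theorem parityNe_singleton {x y : α} (hxy : x ≠ y) : ParityNe {x} {y} :=
  parityNe_cons_cons hxy 0

theorem ParityNe.cons {L L' : Multiset α} (h : ParityNe L L') (a : α) :
    ParityNe (a ::ₘ L) (a ::ₘ L') := by
  obtain ⟨c, hc⟩ := h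
  refine ⟨c, ?_⟩
  by_cases hca : c = a
  · subst hca
    obtain ⟨k, hk⟩ := hc
    exact ⟨k + 1, by simp only [Multiset.count_cons_self]; omega⟩
  · simpa [Multiset.count_cons, hca] using hc

theorem exists_pair_oddAfter (n m : α → ℕ) {x y z : α} (hxy : x ≠ y) (hxz : x ≠ z)
    (hyz : y ≠ z) :
    ∃ a b, (a = x ∨ a = y) ∧ (b = y ∨ b = z) ∧ a ≠ b ∧ OddAfter n {a, b} ∧
      OddAfter m {a, b} := by
  have h₁ : ParityNe {x, y} {x, z} := ⟨y, by simp [hxy.symm, hyz]⟩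
  have h₂ : ParityNe {x, y} {y, z} := ⟨x, by simp [hxy, hxz]⟩
  have h₃ : ParityNe {x, z} {y, z} := ⟨x, by simp [hxy, hxz]⟩
  have n₁ := oddAfter_or_oddAfter n h₁
  have n₂ := oddAfter_or_oddAfter n h₂
  have n₃ := oddAfter_or_oddAfter n h₃
  have m₁ := oddAfter_or_oddAfter m h₁
  have m₂ := oddAfter_or_oddAfter m h₂
  have m₃ := oddAfter_or_oddAfter m h₃
  have : (OddAfter n {x, y} ∧ OddAfter m {x, y}) ∨ (OddAfter n {x, z} ∧ OddAfter m {x, z}) ∨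
      (OddAfter n {y, z} ∧ OddAfter m {y, z}) := by tauto
  rcases this with h | h | h
  exacts [⟨x, y, by simp, by simp, hxy, h⟩, ⟨x, z, by simp, by simp, hxz, h⟩,
    ⟨y, z, by simp, by simp, hyz, h⟩]

theorem exists_oddAfter_pair_and_oddAfter (n m : α → ℕ) {x y z : α} (hxy : x ≠ y) (hxz : x ≠ z)
    (hyz : y ≠ z) :
    ∃ a b, (a = x ∨ a = y) ∧ (b = x ∨ b = y ∨ b = z) ∧ a ≠ b ∧ OddAfter n {a, b} ∧
      OddAfter m {a} := by
  rcases oddAfter_or_oddAfter m (parityNe_singleton hxy) with hm | hm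
  · rcases oddAfter_or_oddAfter n ((parityNe_singleton hyz.symm).cons x) with hn | hn
    exacts [⟨x, z, by simp, by simp, hxz, hn, hm⟩, ⟨x, y, by simp, by simp, hxy, hn, hm⟩]
  · rcases oddAfter_or_oddAfter n ((parityNe_singleton hxz.symm).cons y) with hn | hn
    exacts [⟨y, z, by simp, by simp, hyz, hn, hm⟩, ⟨y, x, by simp, by simp, hxy.symm, hn, hm⟩]

end Parity

theorem exists_two_colors_ne (a b c : Fin 5) (hab : a ≠ b) (hac : a ≠ c) (hbc : b ≠ c) :
    ∃ p q : Fin 5, p ≠ q ∧ p ≠ a ∧ p ≠ b ∧ p ≠ c ∧ q ≠ a ∧ q ≠ b ∧ q ≠ c := by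
  revert a b c; decide

theorem exists_three_colors_ne (a b : Fin 5) (hab : a ≠ b) :
    ∃ p q r : Fin 5, p ≠ q ∧ p ≠ r ∧ q ≠ r ∧ p ≠ a ∧ p ≠ b ∧ q ≠ a ∧ q ≠ b ∧ r ≠ a ∧ r ≠ b := by
  revert a b; decide

section Extension

variable {V : Type*} {G : SimpleGraph V} {S : Finset V}

theorem adj_iff_of_neighborSet_eq {u x : V} {s : Set V} (hN : G.neighborSet u = s) :
    G.Adj x u ↔ x ∈ s := by
  rw [← hN, mem_neighborSet, adj_comm]

theorem properColoring_of_eqOn_compl {α : Type*} {φ φ' : V → α}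
    (hφ' : ProperColoring (GraphDel G S) φ') (hagree : ∀ x ∉ S, φ x = φ' x)
    (hS : ∀ u ∈ S, ∀ w ∈ G.neighborSet u, φ u ≠ φ w) : ProperColoring G φ := by
  intro u w huw
  by_cases hu : u ∈ S
  · exact hS u hu w huw
  by_cases hw : w ∈ S
  · exact (hS w hw u huw.symm).symm
  rw [hagree u hu, hagree w hw]
  exact hφ' u w ⟨huw, hu, hw⟩

variable [Fintype V]

theorem colorCount_eq_add {α : Type*} [DecidableEq α] {φ φ' : V → α}
    (hagree : ∀ x ∉ S, φ x = φ' x) {x : V} (hx : x ∉ S) (c : α) :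
    colorCount G φ x c =
      colorCount (GraphDel G S) φ' x c + ((S.filter (G.Adj x)).val.map φ).count c := by
  rw [Multiset.count_map, ← Finset.filter_val, Finset.card_val, colorCount, colorCount,
    ← Finset.card_union_of_disjoint]
  · congr 1
    ext u
    by_cases hu : u ∈ S
    · simp [GraphDel, hu, eq_comm]
    · simp [GraphDel, hu, hx, hagree u hu]
  · rw [Finset.disjoint_left]
    simp +contextual [GraphDel]

theorem oddAt_of_oddAfter {α : Type*} [DecidableEq α] {φ φ' : V → α}
    (hagree : ∀ x ∉ S, φ x = φ' x) {x : V} (hx : x ∉ S)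
    (h : OddAfter (colorCount (GraphDel G S) φ' x) ((S.filter (G.Adj x)).val.map φ)) :
    OddAt G φ x := by
  obtain ⟨c, hc⟩ := h
  exact ⟨c, by rwa [colorCount_eq_add hagree hx]⟩

theorem oddAt_of_forall_not_adj {m : ℕ} {φ φ' : V → Fin m}
    (hφ' : IsOddColoring (GraphDel G S) m φ') (hagree : ∀ x ∉ S, φ x = φ' x) {x : V}
    (hx : x ∉ S) (hfar : ∀ u ∈ S, ¬ G.Adj x u) (hne : ∃ u, G.Adj x u) : OddAt G φ x := by
  obtain ⟨u, hu⟩ := hne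
  obtain ⟨c, hc⟩ := hφ'.2 x ⟨u, hu, hx, fun h => hfar u h hu⟩
  refine oddAt_of_oddAfter hagree hx ⟨c, ?_⟩
  rwa [Finset.filter_false_of_mem hfar, Finset.empty_val, Multiset.map_zero,
    Multiset.count_zero, add_zero]

theorem oddAt_of_unique {α : Type*} {φ : V → α} {x w : V} (hw : w ∈ G.neighborSet x)
    (huniq : ∀ w' ∈ G.neighborSet x, w' ≠ w → φ w' ≠ φ w) : OddAt G φ x := by
  refine ⟨φ w, ?_⟩
  rw [colorCount, Finset.card_eq_one.mpr ⟨w, ?_⟩]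
  · exact odd_one
  ext w'
  simp only [Finset.mem_filter, Finset.mem_univ, true_and, Finset.mem_singleton]
  exact ⟨fun h => by_contra fun hne => huniq w' h.1 hne h.2, by rintro rfl; exact ⟨hw, rfl⟩⟩

def OddExtension (G : SimpleGraph V) (S : Finset V) (φ' : V → Fin 5) (E : Set V) : Prop :=
  ∃ φ : V → Fin 5, (∀ x ∉ S, φ x = φ' x) ∧ ProperColoring G φ ∧
    ∀ x ∉ E, (∃ u, G.Adj x u) → OddAt G φ x

theorem OddExtension.mono {φ' : V → Fin 5} {E E' : Set V} (h : OddExtension G S φ' E)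
    (hE : E ⊆ E') : OddExtension G S φ' E' := by
  obtain ⟨φ, hagree, hproper, hodd⟩ := h
  exact ⟨φ, hagree, hproper, fun x hx => hodd x (fun h => hx (hE h))⟩

theorem OddExtension.of_local {φ φ' : V → Fin 5} {B E : Set V}
    (hφ' : IsOddColoring (GraphDel G S) 5 φ') (hagree : ∀ x ∉ S, φ x = φ' x)
    (hproper : ∀ u ∈ S, ∀ w ∈ G.neighborSet u, φ u ≠ φ w) (hS : ∀ u ∈ S, OddAt G φ u)
    (hB : ∀ u ∈ S, G.neighborSet u ⊆ ↑S ∪ B) (hboundary : ∀ x ∈ B, x ∉ E → OddAt G φ x) :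
    OddExtension G S φ' E := by
  refine ⟨φ, hagree, properColoring_of_eqOn_compl hφ'.1 hagree hproper, fun x hxE hne => ?_⟩
  by_cases hx : x ∈ S
  · exact hS x hx
  by_cases hfar : ∀ u ∈ S, ¬ G.Adj x u
  · exact oddAt_of_forall_not_adj hφ' hagree hx hfar hne
  push Not at hfar
  obtain ⟨u, hu, hxu⟩ := hfar
  exact hboundary x ((hB u hu hxu.symm).resolve_left hx) hxE

end Extension

section Ear

variable {V : Type*} [Fintype V] [DecidableEq V] {G : SimpleGraph V} {v₁ v₂ v₃ u₀ : V}
  {φ' : V → Fin 5}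

theorem IsEar3.oddExtension (h : IsEar3 G v₁ v₂ v₃ u₀)
    (hφ' : IsOddColoring (GraphDel G ↑({u₀} : Finset V)) 5 φ') (w : V) :
    OddExtension G {u₀} φ' ({v₁, v₂, v₃} \ {w}) := by
  obtain ⟨h₁₂, h₂₃, h₁₃, hN⟩ := h
  have hout : ∀ x ∈ G.neighborSet u₀, x ∉ ({u₀} : Finset V) := fun x hx => by
    simpa using (G.ne_of_adj hx).symm
  have hv₁ := hout v₁ (by simp [hN])
  have hv₂ := hout v₂ (by simp [hN])
  have hv₃ := hout v₃ (by simp [hN])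
  have c₁₂ : φ' v₁ ≠ φ' v₂ := hφ'.1 _ _ ⟨h₁₂, hv₁, hv₂⟩
  have c₁₃ : φ' v₁ ≠ φ' v₃ := hφ'.1 _ _ ⟨h₁₃, hv₁, hv₃⟩
  have c₂₃ : φ' v₂ ≠ φ' v₃ := hφ'.1 _ _ ⟨h₂₃, hv₂, hv₃⟩
  obtain ⟨p, q, hpq, hp₁, hp₂, hp₃, hq₁, hq₂, hq₃⟩ :=
    exists_two_colors_ne (φ' v₁) (φ' v₂) (φ' v₃) c₁₂ c₁₃ c₂₃
  obtain ⟨a, ⟨ha₁, ha₂, ha₃⟩, hodd⟩ : ∃ a, (a ≠ φ' v₁ ∧ a ≠ φ' v₂ ∧ a ≠ φ' v₃) ∧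
      OddAfter (colorCount (GraphDel G ↑({u₀} : Finset V)) φ' w) {a} := by
    rcases oddAfter_or_oddAfter (colorCount _ φ' w) (parityNe_singleton hpq) with h | h
    exacts [⟨p, ⟨hp₁, hp₂, hp₃⟩, h⟩, ⟨q, ⟨hq₁, hq₂, hq₃⟩, h⟩]
  have hagree : ∀ x ∉ ({u₀} : Finset V), Function.update φ' u₀ a x = φ' x := fun x hx =>
    Function.update_of_ne (by simpa using hx) _ _
  simp only [Finset.mem_singleton] at hv₁ hv₂ hv₃
  refine OddExtension.of_local (B := {v₁, v₂, v₃}) hφ' hagree ?_ ?_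
    (by simp [hN, Set.insert_subset_iff]) fun x hx hxE => ?_
  · simp only [Finset.mem_singleton, forall_eq, hN, Set.mem_insert_iff, Set.mem_singleton_iff,
      forall_eq_or_imp]
    simp [*, Ne.symm]
  · simp only [Finset.mem_singleton, forall_eq]
    exact oddAt_of_unique (w := v₁) (by simp [hN]) (by simp [*, Ne.symm])
  · obtain rfl : x = w := by_contra fun hxw => hxE ⟨hx, hxw⟩
    rw [← hN] at hx
    refine oddAt_of_oddAfter hagree (hout x hx) ?_
    simpa [Finset.filter_singleton, G.adj_symm hx] using hodd

end Ear

section OneHat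

variable {V : Type*} [Fintype V] [DecidableEq V] {G : SimpleGraph V} {v₁ v₂ v₃ u₀ u₁ : V}
  {φ' : V → Fin 5}

omit [Fintype V] in
theorem IsOneHat3.triangle_notMem (h : IsOneHat3 G v₁ v₂ v₃ u₀ u₁) (hu₁ : u₁ ≠ v₃) :
    v₁ ∉ ({u₀, u₁} : Finset V) ∧ v₂ ∉ ({u₀, u₁} : Finset V) ∧ v₃ ∉ ({u₀, u₁} : Finset V) := by
  have hadj₀ := fun x => adj_iff_of_neighborSet_eq (x := x) h.2.2.2.1
  have hadj₁ := fun x => adj_iff_of_neighborSet_eq (x := x) h.2.2.2.2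
  simp [G.ne_of_adj ((hadj₀ v₁).2 (by simp)), G.ne_of_adj ((hadj₀ v₂).2 (by simp)),
    G.ne_of_adj ((hadj₀ v₃).2 (by simp)), G.ne_of_adj ((hadj₁ v₁).2 (by simp)),
    G.ne_of_adj ((hadj₁ v₂).2 (by simp)), hu₁.symm]

theorem IsOneHat3.oddAt_triangle (h : IsOneHat3 G v₁ v₂ v₃ u₀ u₁) (hu₁ : u₁ ≠ v₃)
    {φ : V → Fin 5} (hagree : ∀ x ∉ ({u₀, u₁} : Finset V), φ x = φ' x) :
    (OddAfter (colorCount (GraphDel G ↑({u₀, u₁} : Finset V)) φ' v₁) {φ u₀, φ u₁} →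
      OddAt G φ v₁) ∧
    (OddAfter (colorCount (GraphDel G ↑({u₀, u₁} : Finset V)) φ' v₂) {φ u₀, φ u₁} →
      OddAt G φ v₂) ∧
    (OddAfter (colorCount (GraphDel G ↑({u₀, u₁} : Finset V)) φ' v₃) {φ u₀} →
      OddAt G φ v₃) := by
  obtain ⟨hv₁, hv₂, hv₃⟩ := h.triangle_notMem hu₁
  obtain ⟨-, h₂₃, h₁₃, hN₀, hN₁⟩ := h
  have hadj₀ := fun x => adj_iff_of_neighborSet_eq (x := x) hN₀
  have hadj₁ := fun x => adj_iff_of_neighborSet_eq (x := x) hN₁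
  have h₀₁ : u₀ ≠ u₁ := G.ne_of_adj ((hadj₁ u₀).2 (by simp))
  refine ⟨fun h => oddAt_of_oddAfter hagree hv₁ ?_, fun h => oddAt_of_oddAfter hagree hv₂ ?_,
    fun h => oddAt_of_oddAfter hagree hv₃ ?_⟩ <;>
    simp only [Finset.mem_insert, Finset.mem_singleton, not_or] at hv₁ hv₂ hv₃ <;>
    simpa [Finset.filter_insert, Finset.filter_singleton, hadj₀, hadj₁, h₀₁, hu₁.symm, h₁₃.ne',
      h₂₃.ne', hv₃.1] using h

theorem IsOneHat3.oddExtension_of_colors (h : IsOneHat3 G v₁ v₂ v₃ u₀ u₁) (hu₁ : u₁ ≠ v₃)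
    (hφ' : IsOddColoring (GraphDel G ↑({u₀, u₁} : Finset V)) 5 φ') {a b : Fin 5}
    (ha : a ≠ φ' v₁ ∧ a ≠ φ' v₂ ∧ a ≠ φ' v₃) (hb : b ≠ φ' v₁ ∧ b ≠ φ' v₂) (hab : a ≠ b)
    {E : Set V}
    (h₁ : v₁ ∉ E → OddAfter (colorCount (GraphDel G ↑({u₀, u₁} : Finset V)) φ' v₁) {a, b})
    (h₂ : v₂ ∉ E → OddAfter (colorCount (GraphDel G ↑({u₀, u₁} : Finset V)) φ' v₂) {a, b})
    (h₃ : v₃ ∉ E → OddAfter (colorCount (GraphDel G ↑({u₀, u₁} : Finset V)) φ' v₃) {a}) :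
    OddExtension G {u₀, u₁} φ' E := by
  obtain ⟨hv₁, hv₂, hv₃⟩ := h.triangle_notMem hu₁
  have h₀₁ : u₀ ≠ u₁ := G.ne_of_adj ((adj_iff_of_neighborSet_eq h.2.2.2.2).2 (by simp))
  set φ := Function.update (Function.update φ' u₀ a) u₁ b
  have hagree : ∀ x ∉ ({u₀, u₁} : Finset V), φ x = φ' x := fun x hx => by
    simp only [Finset.mem_insert, Finset.mem_singleton, not_or] at hx
    simp [φ, hx.1, hx.2]
  have hφ₀ : φ u₀ = a := by simp [φ, h₀₁]
  have hφ₁ : φ u₁ = b := by simp [φ]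
  obtain ⟨o₁, o₂, o₃⟩ := h.oddAt_triangle hu₁ hagree
  simp only [hφ₀, hφ₁] at o₁ o₂ o₃
  have hφv₁ := hagree _ hv₁
  have hφv₂ := hagree _ hv₂
  have hφv₃ := hagree _ hv₃
  have c₁₂ : φ' v₁ ≠ φ' v₂ := hφ'.1 _ _ ⟨h.1, hv₁, hv₂⟩
  have c₁₃ : φ' v₁ ≠ φ' v₃ := hφ'.1 _ _ ⟨h.2.2.1, hv₁, hv₃⟩
  obtain ⟨-, -, -, hN₀, hN₁⟩ := h
  refine OddExtension.of_local (B := {v₁, v₂, v₃}) hφ' hagree ?_ ?_ ?_ ?_ <;>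
    simp only [Finset.mem_insert, Finset.mem_singleton, forall_eq_or_imp, forall_eq, hN₀, hN₁,
      Set.mem_insert_iff, Set.mem_singleton_iff]
  · simp [*, Ne.symm]
  · exact ⟨oddAt_of_unique (w := v₁) (by simp [hN₀]) (by simp [*, Ne.symm]),
      oddAt_of_unique (w := v₁) (by simp [hN₁]) (by simp [*, Ne.symm])⟩
  · simp [Set.insert_subset_iff]
  · exact ⟨fun hE => o₁ (h₁ hE), fun hE => o₂ (h₂ hE), fun hE => o₃ (h₃ hE)⟩

theorem IsOneHat3.oddExtension_of_eq (h : IsOneHat3 G v₁ v₂ v₃ u₀ v₃)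
    (hφ' : IsOddColoring (GraphDel G ↑({u₀, v₃} : Finset V)) 5 φ') :
    OddExtension G {u₀, v₃} φ' ∅ := by
  obtain ⟨h₁₂, h₂₃, h₁₃, hN₀, hN₃⟩ := h
  have hadj₀ := fun x => adj_iff_of_neighborSet_eq (x := x) hN₀
  have hadj₃ := fun x => adj_iff_of_neighborSet_eq (x := x) hN₃
  have hv₁ : v₁ ∉ ({u₀, v₃} : Finset V) := by
    simp [G.ne_of_adj ((hadj₀ v₁).2 (by simp)), G.ne_of_adj ((hadj₃ v₁).2 (by simp))]
  have hv₂ : v₂ ∉ ({u₀, v₃} : Finset V) := by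
    simp [G.ne_of_adj ((hadj₀ v₂).2 (by simp)), G.ne_of_adj ((hadj₃ v₂).2 (by simp))]
  have h₀₃ : u₀ ≠ v₃ := G.ne_of_adj ((hadj₃ u₀).2 (by simp))
  have c₁₂ : φ' v₁ ≠ φ' v₂ := hφ'.1 _ _ ⟨h₁₂, hv₁, hv₂⟩
  obtain ⟨p, q, r, hpq, hpr, hqr, hp₁, hp₂, hq₁, hq₂, hr₁, hr₂⟩ :=
    exists_three_colors_ne (φ' v₁) (φ' v₂) c₁₂
  obtain ⟨a, b, ha, hb, hab, hodd₁, hodd₂⟩ := exists_pair_oddAfter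
    (colorCount (GraphDel G ↑({u₀, v₃} : Finset V)) φ' v₁)
    (colorCount (GraphDel G ↑({u₀, v₃} : Finset V)) φ' v₂) hpq hpr hqr
  have ha' : a ≠ φ' v₁ ∧ a ≠ φ' v₂ := by rcases ha with rfl | rfl <;> simp [*]
  have hb' : b ≠ φ' v₁ ∧ b ≠ φ' v₂ := by rcases hb with rfl | rfl <;> simp [*]
  set φ := Function.update (Function.update φ' u₀ a) v₃ b
  have hagree : ∀ x ∉ ({u₀, v₃} : Finset V), φ x = φ' x := fun x hx => by
    simp only [Finset.mem_insert, Finset.mem_singleton, not_or] at hx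
    simp [φ, hx.1, hx.2]
  have hφ₀ : φ u₀ = a := by simp [φ, h₀₃]
  have hφ₃ : φ v₃ = b := by simp [φ]
  have hφ₁ := hagree _ hv₁
  have hφ₂ := hagree _ hv₂
  have hodd : OddAt G φ v₁ ∧ OddAt G φ v₂ := by
    simp only [Finset.mem_insert, Finset.mem_singleton, not_or] at hv₁ hv₂
    refine ⟨oddAt_of_oddAfter hagree (by simpa using hv₁) ?_,
      oddAt_of_oddAfter hagree (by simpa using hv₂) ?_⟩
    · simpa [Finset.filter_insert, Finset.filter_singleton, hadj₀, hadj₃, h₀₃, hφ₀, hφ₃] using hodd₁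
    · simpa [Finset.filter_insert, Finset.filter_singleton, hadj₀, hadj₃, h₀₃, hφ₀, hφ₃] using hodd₂
  refine OddExtension.of_local (B := {v₁, v₂}) hφ' hagree ?_ ?_ ?_ ?_ <;>
    simp only [Finset.mem_insert, Finset.mem_singleton, forall_eq_or_imp, forall_eq, hN₀, hN₃,
      Set.mem_insert_iff, Set.mem_singleton_iff]
  · simp [*, Ne.symm]
  · exact ⟨oddAt_of_unique (w := v₁) (by simp [hN₀]) (by simp [*, Ne.symm]),
      oddAt_of_unique (w := v₁) (by simp [hN₃]) (by simp [*, Ne.symm])⟩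
  · simp [Set.insert_subset_iff]
  · exact ⟨fun _ => hodd.1, fun _ => hodd.2⟩

theorem IsOneHat3.oddExtension (h : IsOneHat3 G v₁ v₂ v₃ u₀ u₁)
    (hφ' : IsOddColoring (GraphDel G ↑({u₀, u₁} : Finset V)) 5 φ') {t : V}
    (ht : t = v₁ ∨ t = v₂ ∨ t = v₃) : OddExtension G {u₀, u₁} φ' {t} := by
  by_cases hu₁ : u₁ = v₃
  · subst hu₁
    exact (h.oddExtension_of_eq hφ').mono (Set.empty_subset _)
  obtain ⟨hv₁, hv₂, hv₃⟩ := h.triangle_notMem hu₁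
  have c₁₂ : φ' v₁ ≠ φ' v₂ := hφ'.1 _ _ ⟨h.1, hv₁, hv₂⟩
  have c₁₃ : φ' v₁ ≠ φ' v₃ := hφ'.1 _ _ ⟨h.2.2.1, hv₁, hv₃⟩
  have c₂₃ : φ' v₂ ≠ φ' v₃ := hφ'.1 _ _ ⟨h.2.1, hv₂, hv₃⟩
  obtain ⟨p, q, hpq, hp₁, hp₂, hp₃, hq₁, hq₂, hq₃⟩ :=
    exists_two_colors_ne (φ' v₁) (φ' v₂) (φ' v₃) c₁₂ c₁₃ c₂₃
  set n := colorCount (GraphDel G ↑({u₀, u₁} : Finset V)) φ'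
  have extend := fun a b (ha : a = p ∨ a = q) (hb : b = p ∨ b = q ∨ b = φ' v₃) (hab : a ≠ b) =>
    h.oddExtension_of_colors hu₁ hφ' (E := {t}) (by rcases ha with rfl | rfl <;> simp [*])
      (by rcases hb with rfl | rfl | rfl <;> simp [*, Ne.symm]) hab
  rcases ht with rfl | rfl | rfl
  · obtain ⟨a, b, ha, hb, hab, h₂, h₃⟩ :=
      exists_oddAfter_pair_and_oddAfter (n v₂) (n v₃) hpq hp₃ hq₃
    exact extend a b ha hb hab (absurd rfl) (fun _ => h₂) (fun _ => h₃)
  · obtain ⟨a, b, ha, hb, hab, h₁, h₃⟩ :=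
      exists_oddAfter_pair_and_oddAfter (n v₁) (n v₃) hpq hp₃ hq₃
    exact extend a b ha hb hab (fun _ => h₁) (absurd rfl) (fun _ => h₃)
  · obtain ⟨a, b, ha, hb, hab, h₁, h₂⟩ := exists_pair_oddAfter (n v₁) (n v₂) hpq hp₃ hq₃
    exact extend a b ha (by tauto) hab (fun _ => h₁) (fun _ => h₂) (absurd rfl)

end OneHat

section OneHatPlus

variable {V : Type*} [Fintype V] [DecidableEq V] {G : SimpleGraph V} {v₁ v₂ v₃ u₀ u₁ u₂ u₃ : V}
  {φ' : V → Fin 5}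

omit [Fintype V] [DecidableEq V] in
theorem IsOneHatPlus3.internal_ne (h : IsOneHatPlus3 G v₁ v₂ v₃ u₀ u₁ u₂ u₃) :
    u₀ ≠ u₁ ∧ u₀ ≠ u₂ ∧ u₀ ≠ u₃ ∧ u₁ ≠ u₂ ∧ u₁ ≠ u₃ ∧ u₂ ≠ u₃ := by
  obtain ⟨h₁₂, -, h₁₃, hN₀, hN₁, hN₂, hN₃⟩ := h
  have n₁₀ : v₁ ≠ u₀ := (G.ne_of_adj (by simp [← mem_neighborSet, hN₀])).symm
  have n₂₀ : v₂ ≠ u₀ := (G.ne_of_adj (by simp [← mem_neighborSet, hN₀])).symm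
  have n₂₁ : v₂ ≠ u₁ := (G.ne_of_adj (by simp [← mem_neighborSet, hN₁])).symm
  refine ⟨G.ne_of_adj (by simp [← mem_neighborSet, hN₀]),
    G.ne_of_adj (by simp [← mem_neighborSet, hN₀]), G.ne_of_adj (by simp [← mem_neighborSet, hN₀]),
    G.ne_of_adj_of_not_adj (x := v₁) (by simp [← mem_neighborSet, hN₁])
      (by simp [← mem_neighborSet, hN₂, h₁₂.ne, h₁₃.ne, n₁₀]),
    G.ne_of_adj (by simp [← mem_neighborSet, hN₁]),
    G.ne_of_adj_of_not_adj (x := v₂) (by simp [← mem_neighborSet, hN₂])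
      (by simp [← mem_neighborSet, hN₃, h₁₂.ne', n₂₀, n₂₁])⟩

omit [Fintype V] [DecidableEq V] in
theorem IsOneHatPlus3.eq_of_eq (h : IsOneHatPlus3 G v₁ v₂ v₃ u₀ v₃ u₂ u₃) :
    u₂ = v₁ ∧ u₃ = v₂ := by
  obtain ⟨-, n₀₂, n₀₃, n₁₂, n₁₃, n₂₃⟩ := h.internal_ne
  obtain ⟨-, -, -, -, hN₁, hN₂, hN₃⟩ := h
  have e₂ : u₂ = v₁ := by
    have : u₂ ∈ G.neighborSet v₃ := G.adj_symm (show v₃ ∈ G.neighborSet u₂ by simp [hN₂])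
    simpa [hN₁, n₀₂.symm, n₂₃, G.ne_of_adj (show v₂ ∈ G.neighborSet u₂ by simp [hN₂])] using this
  refine ⟨e₂, ?_⟩
  have : u₃ ∈ G.neighborSet u₂ := e₂ ▸ G.adj_symm (show v₁ ∈ G.neighborSet u₃ by simp [hN₃])
  simpa [hN₂, n₁₃.symm, n₀₃.symm] using this

omit [Fintype V] in
theorem IsOneHatPlus3.triangle_notMem (h : IsOneHatPlus3 G v₁ v₂ v₃ u₀ u₁ u₂ u₃)
    (hu₁ : u₁ ≠ v₃) :
    v₁ ∉ ({u₀, u₁, u₂, u₃} : Finset V) ∧ v₂ ∉ ({u₀, u₁, u₂, u₃} : Finset V) ∧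
      v₃ ∉ ({u₀, u₁, u₂, u₃} : Finset V) := by
  obtain ⟨h₁₂, h₂₃, h₁₃, hN₀, hN₁, hN₂, hN₃⟩ := h
  have n₀ : ∀ x ∈ G.neighborSet u₀, x ≠ u₀ := fun x hx => (G.ne_of_adj hx).symm
  have n₁ : ∀ x ∈ G.neighborSet u₁, x ≠ u₁ := fun x hx => (G.ne_of_adj hx).symm
  have n₂ : ∀ x ∈ G.neighborSet u₂, x ≠ u₂ := fun x hx => (G.ne_of_adj hx).symm
  have n₃ : ∀ x ∈ G.neighborSet u₃, x ≠ u₃ := fun x hx => (G.ne_of_adj hx).symm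
  simp only [hN₀, hN₁, hN₂, hN₃, Set.mem_insert_iff, Set.mem_singleton_iff, forall_eq_or_imp,
    forall_eq] at n₀ n₁ n₂ n₃
  have n₁₂ : v₁ ≠ u₂ := G.ne_of_adj_of_not_adj ((adj_iff_of_neighborSet_eq hN₁).2 (by simp))
    (by simp [← mem_neighborSet, hN₂, n₁.2.1.symm, hu₁, n₀.2.2.2.1])
  have n₂₃ : v₂ ≠ u₃ := G.ne_of_adj_of_not_adj h₂₃
    (by simp [← mem_neighborSet, hN₃, h₁₃.ne', n₀.2.2.1, hu₁.symm])
  have n₃₃ : v₃ ≠ u₃ := G.ne_of_adj_of_not_adj h₂₃.symm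
    (by simp [← mem_neighborSet, hN₃, h₁₂.ne', n₀.2.1, n₁.2.1])
  simp [n₀.1, n₀.2.1, n₀.2.2.1, n₁.1, n₁.2.1, n₂.1, n₂.2.1, n₃.1, n₁₂, n₂₃, n₃₃, hu₁.symm]

omit [DecidableEq V] in
theorem IsOneHatPlus3.oddAt_apex (h : IsOneHatPlus3 G v₁ v₂ v₃ u₀ u₁ u₂ u₃) {φ : V → Fin 5}
    {q : Fin 5} (hc : φ v₁ ≠ φ v₂ ∧ φ v₁ ≠ φ v₃ ∧ φ v₂ ≠ φ v₃)
    (hq : q ≠ φ v₁ ∧ q ≠ φ v₂ ∧ q ≠ φ v₃)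
    (h₁₃ : φ u₁ = φ v₃ ∧ φ u₃ = q ∨ φ u₁ = q ∧ φ u₃ = φ v₂) (h₂ : φ u₂ = φ v₁ ∨ φ u₂ = q) :
    OddAt G φ u₀ := by
  obtain ⟨c₁₂, c₁₃, c₂₃⟩ := hc
  obtain ⟨hq₁, hq₂, hq₃⟩ := hq
  have hN₀ := h.2.2.2.1
  rcases h₁₃ with ⟨e₁, e₃⟩ | ⟨e₁, e₃⟩ <;> rcases h₂ with e₂ | e₂
  · exact oddAt_of_unique (w := v₂) (by simp [hN₀]) (by simp [*, Ne.symm])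
  · exact oddAt_of_unique (w := v₁) (by simp [hN₀]) (by simp [*, Ne.symm])
  · exact oddAt_of_unique (w := v₃) (by simp [hN₀]) (by simp [*, Ne.symm])
  · exact oddAt_of_unique (w := v₁) (by simp [hN₀]) (by simp [*, Ne.symm])

theorem IsOneHatPlus3.oddAt_triangle (h : IsOneHatPlus3 G v₁ v₂ v₃ u₀ u₁ u₂ u₃)
    (hu₁ : u₁ ≠ v₃) {φ : V → Fin 5}
    (hagree : ∀ x ∉ ({u₀, u₁, u₂, u₃} : Finset V), φ x = φ' x) :
    (OddAfter (colorCount (GraphDel G ↑({u₀, u₁, u₂, u₃} : Finset V)) φ' v₁)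
      {φ u₀, φ u₁, φ u₃} → OddAt G φ v₁) ∧
    (OddAfter (colorCount (GraphDel G ↑({u₀, u₁, u₂, u₃} : Finset V)) φ' v₂)
      {φ u₀, φ u₁, φ u₂} → OddAt G φ v₂) ∧
    (OddAfter (colorCount (GraphDel G ↑({u₀, u₁, u₂, u₃} : Finset V)) φ' v₃)
      {φ u₀, φ u₂} → OddAt G φ v₃) := by
  obtain ⟨hv₁, hv₂, hv₃⟩ := h.triangle_notMem hu₁
  obtain ⟨n₀₁, n₀₂, n₀₃, n₁₂, n₁₃, n₂₃⟩ := h.internal_ne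
  obtain ⟨h₁₂, h₂₃, h₁₃, hN₀, hN₁, hN₂, hN₃⟩ := h
  have hadj₀ := fun x => adj_iff_of_neighborSet_eq (x := x) hN₀
  have hadj₁ := fun x => adj_iff_of_neighborSet_eq (x := x) hN₁
  have hadj₂ := fun x => adj_iff_of_neighborSet_eq (x := x) hN₂
  have hadj₃ := fun x => adj_iff_of_neighborSet_eq (x := x) hN₃
  refine ⟨fun h => oddAt_of_oddAfter hagree hv₁ ?_, fun h => oddAt_of_oddAfter hagree hv₂ ?_,
    fun h => oddAt_of_oddAfter hagree hv₃ ?_⟩ <;>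
    simp only [Finset.mem_insert, Finset.mem_singleton, not_or] at hv₁ hv₂ hv₃ <;>
    simpa [Finset.filter_insert, Finset.filter_singleton, hadj₀, hadj₁, hadj₂, hadj₃, hv₁, hv₂,
      hv₃, h₁₂.ne, h₁₃.ne, h₁₂.ne', h₁₃.ne', h₂₃.ne', hu₁.symm, n₀₁, n₀₂, n₀₃, n₁₂, n₁₃]
      using h

theorem IsOneHatPlus3.oddExtension_of_colors (h : IsOneHatPlus3 G v₁ v₂ v₃ u₀ u₁ u₂ u₃)
    (hu₁ : u₁ ≠ v₃) (hφ' : IsOddColoring (GraphDel G ↑({u₀, u₁, u₂, u₃} : Finset V)) 5 φ')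
    {p q a₁ a₂ a₃ : Fin 5} (hp : p ≠ φ' v₁ ∧ p ≠ φ' v₂ ∧ p ≠ φ' v₃)
    (hq : q ≠ φ' v₁ ∧ q ≠ φ' v₂ ∧ q ≠ φ' v₃) (hpq : p ≠ q)
    (ha₁₃ : a₁ = φ' v₃ ∧ a₃ = q ∨ a₁ = q ∧ a₃ = φ' v₂) (ha₂ : a₂ = φ' v₁ ∨ a₂ = q) {E : Set V}
    (h₁ : v₁ ∉ E →
      OddAfter (colorCount (GraphDel G ↑({u₀, u₁, u₂, u₃} : Finset V)) φ' v₁) {p, a₁, a₃})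
    (h₂ : v₂ ∉ E →
      OddAfter (colorCount (GraphDel G ↑({u₀, u₁, u₂, u₃} : Finset V)) φ' v₂) {p, a₁, a₂})
    (h₃ : v₃ ∉ E →
      OddAfter (colorCount (GraphDel G ↑({u₀, u₁, u₂, u₃} : Finset V)) φ' v₃) {p, a₂}) :
    OddExtension G {u₀, u₁, u₂, u₃} φ' E := by
  obtain ⟨hv₁, hv₂, hv₃⟩ := h.triangle_notMem hu₁
  obtain ⟨n₀₁, n₀₂, n₀₃, n₁₂, n₁₃, n₂₃⟩ := h.internal_ne
  set φ : V → Fin 5 := fun x =>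
    if x = u₀ then p else if x = u₁ then a₁ else if x = u₂ then a₂ else if x = u₃ then a₃
    else φ' x
  have hagree : ∀ x ∉ ({u₀, u₁, u₂, u₃} : Finset V), φ x = φ' x := fun x hx => by
    simp only [Finset.mem_insert, Finset.mem_singleton, not_or] at hx
    simp [φ, hx]
  have hφ₀ : φ u₀ = p := by simp [φ]
  have hφ₁ : φ u₁ = a₁ := by simp [φ, n₀₁.symm]
  have hφ₂ : φ u₂ = a₂ := by simp [φ, n₀₂.symm, n₁₂.symm]
  have hφ₃ : φ u₃ = a₃ := by simp [φ, n₀₃.symm, n₁₃.symm, n₂₃.symm]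
  obtain ⟨o₁, o₂, o₃⟩ := h.oddAt_triangle hu₁ hagree
  simp only [hφ₀, hφ₁, hφ₂, hφ₃] at o₁ o₂ o₃
  have hφv₁ := hagree _ hv₁
  have hφv₂ := hagree _ hv₂
  have hφv₃ := hagree _ hv₃
  have c₁₂ : φ' v₁ ≠ φ' v₂ := hφ'.1 _ _ ⟨h.1, hv₁, hv₂⟩
  have c₁₃ : φ' v₁ ≠ φ' v₃ := hφ'.1 _ _ ⟨h.2.2.1, hv₁, hv₃⟩
  have c₂₃ : φ' v₂ ≠ φ' v₃ := hφ'.1 _ _ ⟨h.2.1, hv₂, hv₃⟩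
  have hu₀ : OddAt G φ u₀ := h.oddAt_apex (q := q) (by simp [*]) (by simp [*])
    (by simp [*]) (by simp [*])
  obtain ⟨hp₁, hp₂, hp₃⟩ := hp
  obtain ⟨hq₁, hq₂, hq₃⟩ := hq
  have hc : a₁ ≠ φ' v₁ ∧ a₁ ≠ φ' v₂ ∧ a₁ ≠ p ∧ a₁ ≠ a₃ ∧ a₃ ≠ φ' v₁ ∧ a₃ ≠ p ∧
      a₂ ≠ φ' v₂ ∧ a₂ ≠ φ' v₃ ∧ a₂ ≠ p := by
    rcases ha₁₃ with ⟨rfl, rfl⟩ | ⟨rfl, rfl⟩ <;> rcases ha₂ with rfl | rfl <;>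
      simp [hp₁, hp₂, hp₃, hq₁, hq₂, hq₃, hpq, c₁₂, c₁₃, c₂₃, Ne.symm]
  obtain ⟨-, -, -, hN₀, hN₁, hN₂, hN₃⟩ := h
  refine OddExtension.of_local (B := {v₁, v₂, v₃}) hφ' hagree ?_ ?_ ?_ ?_ <;>
    simp only [Finset.mem_insert, Finset.mem_singleton, forall_eq_or_imp, forall_eq, hN₀, hN₁,
      hN₂, hN₃, Set.mem_insert_iff, Set.mem_singleton_iff]
  · simp [*, Ne.symm]
  · exact ⟨hu₀, oddAt_of_unique (w := v₁) (by simp [hN₁]) (by simp [*, Ne.symm]),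
      oddAt_of_unique (w := v₂) (by simp [hN₂]) (by simp [*, Ne.symm]),
      oddAt_of_unique (w := v₁) (by simp [hN₃]) (by simp [*, Ne.symm])⟩
  · simp [Set.insert_subset_iff]
  · exact ⟨fun hE => o₁ (h₁ hE), fun hE => o₂ (h₂ hE), fun hE => o₃ (h₃ hE)⟩

theorem IsOneHatPlus3.oddExtension_of_eq (h : IsOneHatPlus3 G v₁ v₂ v₃ u₀ v₃ v₁ v₂)
    (hφ' : IsOddColoring (GraphDel G ↑({u₀, v₃, v₁, v₂} : Finset V)) 5 φ') :
    OddExtension G {u₀, v₃, v₁, v₂} φ' ∅ := by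
  obtain ⟨h₁₂, h₂₃, h₁₃, hN₀, hN₃, hN₁, hN₂⟩ := h
  have h₀₁ : G.Adj u₀ v₁ := by rw [← mem_neighborSet, hN₀]; simp
  have h₀₂ : G.Adj u₀ v₂ := by rw [← mem_neighborSet, hN₀]; simp
  have h₀₃ : G.Adj u₀ v₃ := by rw [← mem_neighborSet, hN₀]; simp
  have hclosed : ∀ u ∈ ({u₀, v₃, v₁, v₂} : Finset V), ∀ x, G.Adj u x →
      x ∈ ({u₀, v₃, v₁, v₂} : Finset V) := by
    simp only [Finset.mem_insert, Finset.mem_singleton, forall_eq_or_imp, forall_eq,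
      ← mem_neighborSet, hN₀, hN₁, hN₂, hN₃]
    simp +contextual
  set φ : V → Fin 5 := fun x =>
    if x = u₀ then 0 else if x = v₁ then 1 else if x = v₂ then 2 else if x = v₃ then 3 else φ' x
  have hagree : ∀ x ∉ ({u₀, v₃, v₁, v₂} : Finset V), φ x = φ' x := fun x hx => by
    simp only [Finset.mem_insert, Finset.mem_singleton, not_or] at hx
    simp [φ, hx]
  have hinj : ∀ x ∈ ({u₀, v₃, v₁, v₂} : Finset V), ∀ y ∈ ({u₀, v₃, v₁, v₂} : Finset V),
      x ≠ y → φ x ≠ φ y := by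
    have hφ₀ : φ u₀ = 0 := by simp [φ]
    have hφ₁ : φ v₁ = 1 := by simp [φ, h₀₁.ne']
    have hφ₂ : φ v₂ = 2 := by simp [φ, h₀₂.ne', h₁₂.ne']
    have hφ₃ : φ v₃ = 3 := by simp [φ, h₀₃.ne', h₁₃.ne', h₂₃.ne']
    simp only [Finset.mem_insert, Finset.mem_singleton]
    rintro x (h | h | h | h) y (h' | h' | h' | h') hxy <;> subst x y <;>
      simp [hφ₀, hφ₁, hφ₂, hφ₃] at hxy ⊢
  refine OddExtension.of_local (B := ∅) hφ' hagree
    (fun u hu x hx => hinj u hu x (hclosed u hu x hx) hx.ne) (fun u hu => ?_)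
    (fun u hu x hx => Or.inl (hclosed u hu x hx)) (fun _ h => h.elim)
  obtain ⟨w, hw⟩ : ∃ w, G.Adj u w := by
    simp only [Finset.mem_insert, Finset.mem_singleton] at hu
    rcases hu with rfl | rfl | rfl | rfl
    exacts [⟨_, h₀₁⟩, ⟨_, h₀₃.symm⟩, ⟨_, h₀₁.symm⟩, ⟨_, h₀₂.symm⟩]
  exact oddAt_of_unique hw fun x hx hxw =>
    hinj x (hclosed u hu x hx) w (hclosed u hu w hw) hxw

theorem IsOneHatPlus3.oddExtension (h : IsOneHatPlus3 G v₁ v₂ v₃ u₀ u₁ u₂ u₃)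
    (hφ' : IsOddColoring (GraphDel G ↑({u₀, u₁, u₂, u₃} : Finset V)) 5 φ') {t : V}
    (ht : t = v₁ ∨ t = v₂ ∨ t = v₃) : OddExtension G {u₀, u₁, u₂, u₃} φ' {t} := by
  by_cases hu₁ : u₁ = v₃
  · subst hu₁
    obtain ⟨h₂, h₃⟩ := h.eq_of_eq
    subst u₂ u₃
    exact (h.oddExtension_of_eq hφ').mono (Set.empty_subset _)
  obtain ⟨hv₁, hv₂, hv₃⟩ := h.triangle_notMem hu₁
  have c₁₂ : φ' v₁ ≠ φ' v₂ := hφ'.1 _ _ ⟨h.1, hv₁, hv₂⟩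
  have c₁₃ : φ' v₁ ≠ φ' v₃ := hφ'.1 _ _ ⟨h.2.2.1, hv₁, hv₃⟩
  have c₂₃ : φ' v₂ ≠ φ' v₃ := hφ'.1 _ _ ⟨h.2.1, hv₂, hv₃⟩
  obtain ⟨p, q, hpq, hp₁, hp₂, hp₃, hq₁, hq₂, hq₃⟩ :=
    exists_two_colors_ne (φ' v₁) (φ' v₂) (φ' v₃) c₁₂ c₁₃ c₂₃
  set n := colorCount (GraphDel G ↑({u₀, u₁, u₂, u₃} : Finset V)) φ'
  have extend := fun a₁ a₂ a₃ (ha₁₃ : a₁ = φ' v₃ ∧ a₃ = q ∨ a₁ = q ∧ a₃ = φ' v₂)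
      (ha₂ : a₂ = φ' v₁ ∨ a₂ = q) =>
    h.oddExtension_of_colors hu₁ hφ' (E := {t}) ⟨hp₁, hp₂, hp₃⟩ ⟨hq₁, hq₂, hq₃⟩ hpq ha₁₃ ha₂
  -- `v₁` sees `{p, a₁, a₃}`, `v₃` sees `{p, a₂}` and `v₂` sees `{p, a₁, a₂}`, so `(a₁, a₃)` can be
  -- chosen for `v₁` and `a₂` for `v₃` independently, and the choice left free can serve `v₂`.
  have choose₁₃ : ∃ a₁ a₃, (a₁ = φ' v₃ ∧ a₃ = q ∨ a₁ = q ∧ a₃ = φ' v₂) ∧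
      OddAfter (n v₁) {p, a₁, a₃} := by
    rcases oddAfter_or_oddAfter (n v₁) (L := {p, φ' v₃, q}) (L' := {p, q, φ' v₂})
      ⟨φ' v₃, by simp [hp₃.symm, hq₃.symm, c₂₃.symm]⟩ with h | h
    exacts [⟨_, _, Or.inl ⟨rfl, rfl⟩, h⟩, ⟨_, _, Or.inr ⟨rfl, rfl⟩, h⟩]
  have choose₂ : ∃ a₂, (a₂ = φ' v₁ ∨ a₂ = q) ∧ OddAfter (n v₃) {p, a₂} := by
    rcases oddAfter_or_oddAfter (n v₃) ((parityNe_singleton hq₁.symm).cons p) with h | h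
    exacts [⟨_, Or.inl rfl, h⟩, ⟨_, Or.inr rfl, h⟩]
  rcases ht with rfl | rfl | rfl
  · obtain ⟨a₂, ha₂, h₃⟩ := choose₂
    rcases oddAfter_or_oddAfter (n v₂) ((parityNe_cons_cons hq₃.symm {a₂}).cons p) with h₂ | h₂
    · exact extend _ a₂ q (Or.inl ⟨rfl, rfl⟩) ha₂ (absurd rfl) (fun _ => h₂) (fun _ => h₃)
    · exact extend _ a₂ _ (Or.inr ⟨rfl, rfl⟩) ha₂ (absurd rfl) (fun _ => h₂) (fun _ => h₃)
  · obtain ⟨a₁, a₃, ha₁₃, h₁⟩ := choose₁₃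
    obtain ⟨a₂, ha₂, h₃⟩ := choose₂
    exact extend a₁ a₂ a₃ ha₁₃ ha₂ (fun _ => h₁) (absurd rfl) (fun _ => h₃)
  · obtain ⟨a₁, a₃, ha₁₃, h₁⟩ := choose₁₃
    rcases oddAfter_or_oddAfter (n v₂)
      (((parityNe_singleton hq₁.symm).cons a₁).cons p) with h₂ | h₂
    · exact extend a₁ _ a₃ ha₁₃ (Or.inl rfl) (fun _ => h₁) (fun _ => h₂) (absurd rfl)
    · exact extend a₁ _ a₃ ha₁₃ (Or.inr rfl) (fun _ => h₁) (fun _ => h₂) (absurd rfl)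

end OneHatPlus

theorem three_tree_extension_general {V : Type*} [Fintype V] [DecidableEq V]
    (G : SimpleGraph V) (v : Fin 3 → V) (u₀ : V) (S : Finset V)
    (hB : (S = {u₀} ∧ IsEar3 G (v 0) (v 1) (v 2) u₀) ∨
      (∃ u₁, S = {u₀, u₁} ∧ IsOneHat3 G (v 0) (v 1) (v 2) u₀ u₁) ∨
      (∃ u₁ u₂ u₃, S = {u₀, u₁, u₂, u₃} ∧
        IsOneHatPlus3 G (v 0) (v 1) (v 2) u₀ u₁ u₂ u₃))
    (φ' : V → Fin 5) (hφ' : IsOddColoring (GraphDel G ↑S) 5 φ') :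
    ∀ i : Fin 3,
      (∃ φ : V → Fin 5, (∀ x ∉ S, φ x = φ' x) ∧ ProperColoring G φ ∧
        ∀ x : V, x ≠ v i → x ≠ v (i + 1) → (∃ u, G.Adj x u) → OddAt G φ x) ∧
      (((∃ u₁, S = {u₀, u₁} ∧ IsOneHat3 G (v 0) (v 1) (v 2) u₀ u₁) ∨
          (∃ u₁ u₂ u₃, S = {u₀, u₁, u₂, u₃} ∧
            IsOneHatPlus3 G (v 0) (v 1) (v 2) u₀ u₁ u₂ u₃)) →
        ∃ φ : V → Fin 5, (∀ x ∉ S, φ x = φ' x) ∧ ProperColoring G φ ∧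
          ∀ x : V, x ≠ v i → (∃ u, G.Adj x u) → OddAt G φ x) := by
  intro i
  have hvi : v i = v 0 ∨ v i = v 1 ∨ v i = v 2 := by fin_cases i <;> simp
  have hat : ((∃ u₁, S = {u₀, u₁} ∧ IsOneHat3 G (v 0) (v 1) (v 2) u₀ u₁) ∨
      (∃ u₁ u₂ u₃, S = {u₀, u₁, u₂, u₃} ∧ IsOneHatPlus3 G (v 0) (v 1) (v 2) u₀ u₁ u₂ u₃)) →
      OddExtension G S φ' {v i} := by
    rintro (⟨u₁, rfl, h⟩ | ⟨u₁, u₂, u₃, rfl, h⟩)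
    exacts [h.oddExtension hφ' hvi, h.oddExtension hφ' hvi]
  have hpair : OddExtension G S φ' {v i, v (i + 1)} := by
    rcases hB with ⟨rfl, h⟩ | h | h
    · refine (h.oddExtension hφ' (v (i + 2))).mono ?_
      fin_cases i <;> simp [Set.subset_def]
    exacts [(hat (Or.inl h)).mono (by simp), (hat (Or.inr h)).mono (by simp)]
  obtain ⟨φ, hagree, hproper, hodd⟩ := hpair
  exact ⟨⟨φ, hagree, hproper, fun x hx hx' => hodd x (by simp [hx, hx'])⟩, hat⟩

/-- Extension lemma for 3-trees: if `B({v₁,v₂,v₃},u₀)` is an ear,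
one-hat or one-hat plus with internal vertex set `S` and `G - S` has an odd
5-coloring `φ'`, then for each `i` it extends to a proper 5-coloring of `G` that is
odd away from `{vᵢ, v_{i+1}}` (indices mod 3), and if `B` is a one-hat or a one-hat
plus, odd away from `{vᵢ}` alone. -/
theorem three_tree_extension {V : Type*} [Fintype V] [DecidableEq V]
    (G : SimpleGraph V) (hG : IsKTree 3 G) (v : Fin 3 → V) (u₀ : V) (S : Finset V)
    (hB : (S = {u₀} ∧ IsEar3 G (v 0) (v 1) (v 2) u₀) ∨
      (∃ u₁, S = {u₀, u₁} ∧ IsOneHat3 G (v 0) (v 1) (v 2) u₀ u₁) ∨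
      (∃ u₁ u₂ u₃, S = {u₀, u₁, u₂, u₃} ∧
        IsOneHatPlus3 G (v 0) (v 1) (v 2) u₀ u₁ u₂ u₃))
    (φ' : V → Fin 5) (hφ' : IsOddColoring (GraphDel G ↑S) 5 φ') :
    ∀ i : Fin 3,
      (∃ φ : V → Fin 5, (∀ x ∉ S, φ x = φ' x) ∧ ProperColoring G φ ∧
        ∀ x : V, x ≠ v i → x ≠ v (i + 1) → (∃ u, G.Adj x u) → OddAt G φ x) ∧
      (((∃ u₁, S = {u₀, u₁} ∧ IsOneHat3 G (v 0) (v 1) (v 2) u₀ u₁) ∨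
          (∃ u₁ u₂ u₃, S = {u₀, u₁, u₂, u₃} ∧
            IsOneHatPlus3 G (v 0) (v 1) (v 2) u₀ u₁ u₂ u₃)) →
        ∃ φ : V → Fin 5, (∀ x ∉ S, φ x = φ' x) ∧ ProperColoring G φ ∧
          ∀ x : V, x ≠ v i → (∃ u, G.Adj x u) → OddAt G φ x) :=
  three_tree_extension_general G v u₀ S hB φ' hφ'
end

section
/- Let G be a 2-tree containing a good hat: a hat B({v₁,v₂},u₀) with vertices {v₁,v₂,u₀,u₁,u₂}, N_G(u₀)={v₁,v₂,u₁,u₂}, N_G(u₁)={v₁,u₀}, N_G(u₂)={v₂,u₀}, such that deg_G(v₁) equals 4 or is odd. If G − {u₀,u₁,u₂} admits an odd 4-coloring, then G admits an odd 4-coloring. -/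
open SimpleGraph Finset
open scoped Classical

set_option maxRecDepth 10000 in
set_option synthInstance.maxSize 2000 in
set_option synthInstance.maxHeartbeats 1000000 in
private lemma hatKey : ∀ (A B X : Fin 4) (q : Fin 4 → Bool), A ≠ B → X ≠ A → X ≠ B →
    (∃ c, q c = true) →
    ∃ c₀ c₁ c₂ : Fin 4,
      c₀ ≠ A ∧ c₀ ≠ B ∧ c₁ ≠ A ∧ c₁ ≠ c₀ ∧ c₂ ≠ B ∧ c₂ ≠ c₀ ∧
      (∃ c, ((if A = c then 1 else 0) + (if B = c then 1 else 0) + (if c₁ = c then 1 else 0)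
          + (if c₂ = c then 1 else 0)) % 2 = 1) ∧
      (∃ c, ((if B = c then 1 else 0) + (if X = c then 1 else 0) + (if c₀ = c then 1 else 0)
          + (if c₁ = c then 1 else 0)) % 2 = 1) ∧
      (∃ c, ((cond (q c) 1 0 : ℕ) + (if c₀ = c then 1 else 0)
          + (if c₂ = c then 1 else 0)) % 2 = 1) := by decide

private lemma exColor : ∀ A B : Fin 4, ∃ X, X ≠ A ∧ X ≠ B := by decide

/-- Good-hat reduction for 2-trees: if `G` has a hat over `{v₁,v₂}` with
`deg v₁ = 4` or odd, and `G - {u₀,u₁,u₂}` is odd 4-colorable, then so is `G`. -/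
theorem two_tree_good_hat {V : Type*} [Fintype V] (G : SimpleGraph V)
    (hG : IsKTree 2 G) (v₁ v₂ u₀ u₁ u₂ : V)
    (hhat : IsHat2 G v₁ v₂ u₀ u₁ u₂)
    (hdeg : gdeg G v₁ = 4 ∨ Odd (gdeg G v₁))
    (h : OddColorable (GraphDel G {u₀, u₁, u₂}) 4) :
    OddColorable G 4 := by
  obtain ⟨hv12, hN0, hN1, hN2⟩ := hhat
  set S : Set V := {u₀, u₁, u₂} with hS
  set G' : SimpleGraph V := GraphDel G S with hG'def
  obtain ⟨φ, hφp, hφo⟩ := h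
  -- adjacency characterizations
  have hmem0 : ∀ w, G.Adj u₀ w ↔ (w = v₁ ∨ w = v₂ ∨ w = u₁ ∨ w = u₂) := by
    intro w; rw [← SimpleGraph.mem_neighborSet, hN0]; simp [Set.mem_insert_iff]
  have hmem1 : ∀ w, G.Adj u₁ w ↔ (w = v₁ ∨ w = u₀) := by
    intro w; rw [← SimpleGraph.mem_neighborSet, hN1]; simp [Set.mem_insert_iff]
  have hmem2 : ∀ w, G.Adj u₂ w ↔ (w = v₂ ∨ w = u₀) := by
    intro w; rw [← SimpleGraph.mem_neighborSet, hN2]; simp [Set.mem_insert_iff]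
  have a0v1 : G.Adj u₀ v₁ := (hmem0 v₁).mpr (Or.inl rfl)
  have a0v2 : G.Adj u₀ v₂ := (hmem0 v₂).mpr (Or.inr (Or.inl rfl))
  have a0u1 : G.Adj u₀ u₁ := (hmem0 u₁).mpr (Or.inr (Or.inr (Or.inl rfl)))
  have a0u2 : G.Adj u₀ u₂ := (hmem0 u₂).mpr (Or.inr (Or.inr (Or.inr rfl)))
  have a1v1 : G.Adj u₁ v₁ := (hmem1 v₁).mpr (Or.inl rfl)
  have a2v2 : G.Adj u₂ v₂ := (hmem2 v₂).mpr (Or.inl rfl)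
  have nv1v2 : v₁ ≠ v₂ := hv12.ne
  have nv1u0 : v₁ ≠ u₀ := a0v1.symm.ne
  have nv2u0 : v₂ ≠ u₀ := a0v2.symm.ne
  have nv1u1 : v₁ ≠ u₁ := a1v1.symm.ne
  have nv2u2 : v₂ ≠ u₂ := a2v2.symm.ne
  have nu0u1 : u₀ ≠ u₁ := a0u1.ne
  have nu0u2 : u₀ ≠ u₂ := a0u2.ne
  have nu1u2 : u₁ ≠ u₂ := by
    intro hh
    have h1 : G.Adj u₂ v₁ := hh ▸ a1v1
    rcases (hmem2 v₁).mp h1 with h' | h'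
    exacts [nv1v2 h', nv1u0 h']
  -- excluding the degenerate (degree-2) configuration
  have hdeg2 : (∀ w, G.Adj v₁ w ↔ (w = v₂ ∨ w = u₀)) → False := by
    intro hA
    have hfe : (Finset.univ.filter fun u => G.Adj v₁ u) = {v₂, u₀} := by
      ext w; simp [hA w]
    have h2 : gdeg G v₁ = 2 := by
      have hg : gdeg G v₁ = (Finset.univ.filter (fun u => G.Adj v₁ u)).card := by
        simp only [gdeg]
      rw [hg, hfe, Finset.card_insert_of_notMem (by simp [nv2u0]), Finset.card_singleton]
    rcases hdeg with h4 | ho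
    · rw [h2] at h4; exact absurd h4 (by norm_num)
    · rw [h2] at ho; exact (by decide : ¬ Odd 2) ho
  have nv1u2 : v₁ ≠ u₂ := by
    intro hh
    exact hdeg2 (fun w => by rw [hh]; exact hmem2 w)
  have nv2u1 : v₂ ≠ u₁ := by
    intro hh
    have hv2mem : ∀ w, G.Adj v₂ w ↔ (w = v₁ ∨ w = u₀) := fun w => by rw [hh]; exact hmem1 w
    rcases (hv2mem u₂).mp a2v2.symm with h' | h'
    exacts [nv1u2 h'.symm, nu0u2 h'.symm]
  have nav1u2 : ¬ G.Adj v₁ u₂ := by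
    intro hA
    rcases (hmem2 v₁).mp hA.symm with h' | h'
    exacts [nv1v2 h', nv1u0 h']
  have nav2u1 : ¬ G.Adj v₂ u₁ := by
    intro hA
    rcases (hmem1 v₂).mp hA.symm with h' | h'
    exacts [nv1v2 h'.symm, nv2u0 h']
  have hSmem : ∀ w : V, w ∈ S ↔ (w = u₀ ∨ w = u₁ ∨ w = u₂) := by
    intro w; simp [hS]
  have hv1S : v₁ ∉ S := by rw [hSmem]; push_neg; exact ⟨nv1u0, nv1u1, nv1u2⟩
  have hv2S : v₂ ∉ S := by rw [hSmem]; push_neg; exact ⟨nv2u0, nv2u1, nv2u2⟩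
  have hu0S : u₀ ∈ S := (hSmem u₀).mpr (Or.inl rfl)
  have hu1S : u₁ ∈ S := (hSmem u₁).mpr (Or.inr (Or.inl rfl))
  have hu2S : u₂ ∈ S := (hSmem u₂).mpr (Or.inr (Or.inr rfl))
  have hG'adj : ∀ x y, G'.Adj x y ↔ (G.Adj x y ∧ x ∉ S ∧ y ∉ S) := fun x y => Iff.rfl
  have hG'12 : G'.Adj v₁ v₂ := (hG'adj v₁ v₂).mpr ⟨hv12, hv1S, hv2S⟩
  have hCC : ∀ (H : SimpleGraph V) (χ : V → Fin 4) (v : V) (c : Fin 4),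
      colorCount H χ v c = (Finset.univ.filter (fun u => H.Adj v u ∧ χ u = c)).card := by
    intro H χ v c
    simp only [colorCount]
    congr
  have hGD : ∀ (H : SimpleGraph V) (v : V),
      gdeg H v = (Finset.univ.filter (fun u => H.Adj v u)).card := by
    intro H v
    simp only [gdeg]
  -- counting along an explicit neighbor list
  have hccu : ∀ (H : SimpleGraph V) (χ : V → Fin 4) (v : V) (L : Finset V),
      (∀ u, H.Adj v u ↔ u ∈ L) → ∀ c,
      colorCount H χ v c = ∑ u ∈ L, (if χ u = c then 1 else 0) := by
    intro H χ v L hL c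
    rw [hCC, Finset.card_filter]
    rw [← Finset.sum_subset (Finset.subset_univ L) (fun x _ hx => by
          rw [if_neg]; rintro ⟨hA, -⟩; exact hx ((hL x).mp hA))]
    refine Finset.sum_congr rfl fun u hu => ?_
    simp [(hL u).mpr hu]
  have hAB : φ v₁ ≠ φ v₂ := hφp v₁ v₂ hG'12
  set q : Fin 4 → Bool := fun c => decide (colorCount G' φ v₂ c % 2 = 1) with hqdef
  have hqiff : ∀ c, q c = true ↔ colorCount G' φ v₂ c % 2 = 1 := by
    intro c; rw [hqdef]; exact decide_eq_true_iff
  have hqex : ∃ c, q c = true := by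
    obtain ⟨c, hc⟩ := hφo v₂ ⟨v₁, hG'12.symm⟩
    exact ⟨c, (hqiff c).mpr (Nat.odd_iff.mp hc)⟩
  -- the main combinatorial choice
  have hmain : ∃ c₀ c₁ c₂ : Fin 4,
      c₀ ≠ φ v₁ ∧ c₀ ≠ φ v₂ ∧ c₁ ≠ φ v₁ ∧ c₁ ≠ c₀ ∧ c₂ ≠ φ v₂ ∧ c₂ ≠ c₀ ∧
      (∃ c, ((if φ v₁ = c then 1 else 0) + (if φ v₂ = c then 1 else 0)
          + (if c₁ = c then 1 else 0) + (if c₂ = c then 1 else 0)) % 2 = 1) ∧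
      (∃ c, ((cond (q c) 1 0 : ℕ) + (if c₀ = c then 1 else 0)
          + (if c₂ = c then 1 else 0)) % 2 = 1) ∧
      (Odd (gdeg G v₁) ∨ ∃ c, (colorCount G' φ v₁ c + (if c₀ = c then 1 else 0)
          + (if c₁ = c then 1 else 0)) % 2 = 1) := by
    rcases hdeg with h4 | hodd
    · -- degree-4 case: find the fourth neighbor x of v₁
      have h4' : (Finset.univ.filter fun u => G.Adj v₁ u).card = 4 := by
        rw [← hGD]; exact h4
      have hsub : ({v₂, u₀, u₁} : Finset V) ⊆ Finset.univ.filter (fun u => G.Adj v₁ u) := by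
        intro w hw
        simp only [Finset.mem_insert, Finset.mem_singleton] at hw
        simp only [Finset.mem_filter, Finset.mem_univ, true_and]
        rcases hw with rfl | rfl | rfl
        exacts [hv12, a0v1.symm, a1v1.symm]
      have hc3 : ({v₂, u₀, u₁} : Finset V).card = 3 := by
        rw [Finset.card_insert_of_notMem (by simp [nv2u0, nv2u1]),
          Finset.card_insert_of_notMem (by simp [nu0u1]), Finset.card_singleton]
      have hex : ∃ x, x ∈ (Finset.univ.filter fun u => G.Adj v₁ u) ∧
          x ∉ ({v₂, u₀, u₁} : Finset V) := by
        by_contra hno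
        push_neg at hno
        have hsub2 : (Finset.univ.filter fun u => G.Adj v₁ u) ⊆ ({v₂, u₀, u₁} : Finset V) :=
          fun w hw => hno w hw
        have := Finset.card_le_card hsub2
        omega
      obtain ⟨x, hxf, hxn⟩ := hex
      have hxadj : G.Adj v₁ x := (Finset.mem_filter.mp hxf).2
      have hxv2 : x ≠ v₂ := fun hh => hxn (by simp [hh])
      have hxu0 : x ≠ u₀ := fun hh => hxn (by simp [hh])
      have hxu1 : x ≠ u₁ := fun hh => hxn (by simp [hh])
      have hxu2 : x ≠ u₂ := fun hh => nav1u2 (hh ▸ hxadj)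
      have hxS : x ∉ S := by rw [hSmem]; push_neg; exact ⟨hxu0, hxu1, hxu2⟩
      have hfeq : (Finset.univ.filter fun u => G.Adj v₁ u) = insert x {v₂, u₀, u₁} := by
        refine (Finset.eq_of_subset_of_card_le ?_ ?_).symm
        · intro w hw
          rcases Finset.mem_insert.mp hw with rfl | hw'
          exacts [hxf, hsub hw']
        · rw [h4', Finset.card_insert_of_notMem hxn, hc3]
      have hAdjv1 : ∀ u, G.Adj v₁ u ↔ (u = x ∨ u = v₂ ∨ u = u₀ ∨ u = u₁) := by
        intro u
        have hmf : G.Adj v₁ u ↔ u ∈ (Finset.univ.filter fun u => G.Adj v₁ u) := by simp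
        rw [hmf, hfeq]; simp
      have hG'v1 : ∀ u, G'.Adj v₁ u ↔ u ∈ ({v₂, x} : Finset V) := by
        intro u
        rw [hG'adj]
        constructor
        · rintro ⟨hA, -, huS⟩
          rcases (hAdjv1 u).mp hA with rfl | rfl | rfl | rfl
          · simp
          · simp
          · exact absurd hu0S huS
          · exact absurd hu1S huS
        · intro hu
          rcases Finset.mem_insert.mp hu with rfl | hu'
          · exact ⟨hv12, hv1S, hv2S⟩
          · rw [Finset.mem_singleton] at hu'
            subst hu'
            exact ⟨hxadj, hv1S, hxS⟩
      have hn1 : ∀ c, colorCount G' φ v₁ c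
          = (if φ v₂ = c then 1 else 0) + (if φ x = c then 1 else 0) := by
        intro c
        rw [hccu G' φ v₁ {v₂, x} hG'v1 c, Finset.sum_pair (Ne.symm hxv2)]
      have hXA : φ x ≠ φ v₁ := (hφp v₁ x ((hG'adj v₁ x).mpr ⟨hxadj, hv1S, hxS⟩)).symm
      have hXB : φ x ≠ φ v₂ := by
        intro hxb
        obtain ⟨c, hc⟩ := hφo v₁ ⟨v₂, hG'12⟩
        rw [hn1 c, hxb] at hc
        by_cases hbc : φ v₂ = c <;> simp [hbc, Nat.odd_iff] at hc
      obtain ⟨c₀, c₁, c₂, p1, p2, p3, p4, p5, p6, hu0c, hv1c, hv2c⟩ :=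
        hatKey (φ v₁) (φ v₂) (φ x) q hAB hXA hXB hqex
      refine ⟨c₀, c₁, c₂, p1, p2, p3, p4, p5, p6, hu0c, hv2c, Or.inr ?_⟩
      obtain ⟨c, hc⟩ := hv1c
      refine ⟨c, ?_⟩
      rw [hn1 c]
      omega
    · obtain ⟨X, hXA, hXB⟩ := exColor (φ v₁) (φ v₂)
      obtain ⟨c₀, c₁, c₂, p1, p2, p3, p4, p5, p6, hu0c, _, hv2c⟩ :=
        hatKey (φ v₁) (φ v₂) X q hAB hXA hXB hqex
      exact ⟨c₀, c₁, c₂, p1, p2, p3, p4, p5, p6, hu0c, hv2c, Or.inl hodd⟩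
  obtain ⟨c₀, c₁, c₂, p1, p2, p3, p4, p5, p6, hu0odd, hv2odd, hv1odd⟩ := hmain
  -- define the extended coloring
  set ψ : V → Fin 4 := fun w =>
    if w = u₀ then c₀ else if w = u₁ then c₁ else if w = u₂ then c₂ else φ w with hψdef
  have hψ0 : ψ u₀ = c₀ := by simp [hψdef]
  have hψ1 : ψ u₁ = c₁ := by simp [hψdef, Ne.symm nu0u1]
  have hψ2 : ψ u₂ = c₂ := by simp [hψdef, Ne.symm nu0u2, Ne.symm nu1u2]
  have hψf : ∀ w, w ∉ S → ψ w = φ w := by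
    intro w hw
    rw [hSmem] at hw
    push_neg at hw
    simp [hψdef, hw.1, hw.2.1, hw.2.2]
  -- count splitting
  have hsplit : ∀ v, v ∉ S → ∀ c, colorCount G ψ v c = colorCount G' φ v c +
      ((if G.Adj v u₀ ∧ c₀ = c then 1 else 0) + (if G.Adj v u₁ ∧ c₁ = c then 1 else 0)
        + (if G.Adj v u₂ ∧ c₂ = c then 1 else 0)) := by
    intro v hv c
    rw [hCC, hCC, Finset.card_filter, Finset.card_filter]
    have hpt : ∀ u : V, (if G.Adj v u ∧ ψ u = c then 1 else 0)
        = (if G'.Adj v u ∧ φ u = c then 1 else 0)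
          + ((if u = u₀ then (if G.Adj v u₀ ∧ c₀ = c then 1 else 0) else 0)
            + (if u = u₁ then (if G.Adj v u₁ ∧ c₁ = c then 1 else 0) else 0)
            + (if u = u₂ then (if G.Adj v u₂ ∧ c₂ = c then 1 else 0) else 0)) := by
      intro u
      by_cases h0 : u = u₀
      · have hng : ¬ (G'.Adj v u₀ ∧ φ u₀ = c) := fun hh => hh.1.2.2 hu0S
        rw [h0]
        simp [hψ0, hng, nu0u1, nu0u2]
      by_cases h1 : u = u₁
      · have hng : ¬ (G'.Adj v u₁ ∧ φ u₁ = c) := fun hh => hh.1.2.2 hu1S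
        rw [h1]
        simp [hψ1, hng, Ne.symm nu0u1, nu1u2]
      by_cases h2 : u = u₂
      · have hng : ¬ (G'.Adj v u₂ ∧ φ u₂ = c) := fun hh => hh.1.2.2 hu2S
        rw [h2]
        simp [hψ2, hng, Ne.symm nu0u2, Ne.symm nu1u2]
      · have huS : u ∉ S := by rw [hSmem]; push_neg; exact ⟨h0, h1, h2⟩
        have hψu : ψ u = φ u := hψf u huS
        have hGG' : (G.Adj v u ∧ ψ u = c) ↔ (G'.Adj v u ∧ φ u = c) := by
          rw [hψu]
          constructor
          · rintro ⟨hA, hφu⟩; exact ⟨(hG'adj v u).mpr ⟨hA, hv, huS⟩, hφu⟩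
          · rintro ⟨hA, hφu⟩; exact ⟨((hG'adj v u).mp hA).1, hφu⟩
        rw [if_neg h0, if_neg h1, if_neg h2]
        simp only [hGG']
        omega
    have hsum1 := Finset.sum_congr rfl (fun u (_ : u ∈ (Finset.univ : Finset V)) => hpt u)
    rw [hsum1, Finset.sum_add_distrib, Finset.sum_add_distrib, Finset.sum_add_distrib,
      Finset.sum_ite_eq', Finset.sum_ite_eq', Finset.sum_ite_eq']
    simp
  have hccv1 : ∀ c, colorCount G ψ v₁ c = colorCount G' φ v₁ c
      + ((if c₀ = c then 1 else 0) + (if c₁ = c then 1 else 0)) := by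
    intro c
    rw [hsplit v₁ hv1S c]
    simp [a0v1.symm, a1v1.symm, nav1u2]
  have hccv2 : ∀ c, colorCount G ψ v₂ c = colorCount G' φ v₂ c
      + ((if c₀ = c then 1 else 0) + (if c₂ = c then 1 else 0)) := by
    intro c
    rw [hsplit v₂ hv2S c]
    simp [a0v2.symm, a2v2.symm, nav2u1]
  have hadj0 : ∀ u, G.Adj u₀ u ↔ u ∈ ({v₁, v₂, u₁, u₂} : Finset V) := by
    intro u; rw [hmem0]; simp
  have hccu0 : ∀ c, colorCount G ψ u₀ c = (if φ v₁ = c then 1 else 0)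
      + (if φ v₂ = c then 1 else 0) + (if c₁ = c then 1 else 0) + (if c₂ = c then 1 else 0) := by
    intro c
    rw [hccu G ψ u₀ _ hadj0 c,
      Finset.sum_insert (by simp [nv1v2, nv1u1, nv1u2]),
      Finset.sum_insert (by simp [nv2u1, nv2u2]),
      Finset.sum_pair nu1u2,
      hψf v₁ hv1S, hψf v₂ hv2S, hψ1, hψ2]
    ring
  have hccu1 : ∀ c, colorCount G ψ u₁ c = (if φ v₁ = c then 1 else 0)
      + (if c₀ = c then 1 else 0) := by
    intro c
    rw [hccu G ψ u₁ {v₁, u₀} (fun u => by rw [hmem1]; simp) c,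
      Finset.sum_pair nv1u0, hψf v₁ hv1S, hψ0]
  have hccu2 : ∀ c, colorCount G ψ u₂ c = (if φ v₂ = c then 1 else 0)
      + (if c₀ = c then 1 else 0) := by
    intro c
    rw [hccu G ψ u₂ {v₂, u₀} (fun u => by rw [hmem2]; simp) c,
      Finset.sum_pair nv2u0, hψf v₂ hv2S, hψ0]
  -- proper coloring
  have hψprop : ProperColoring G ψ := by
    have hone : ∀ p qq, G.Adj p qq → p ∈ S → ψ p ≠ ψ qq := by
      intro p qq hpq hpS
      rcases (hSmem p).mp hpS with rfl | rfl | rfl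
      · rw [hψ0]
        rcases (hmem0 qq).mp hpq with h' | h' | h' | h'
        · rw [h', hψf v₁ hv1S]; exact p1
        · rw [h', hψf v₂ hv2S]; exact p2
        · rw [h', hψ1]; exact Ne.symm p4
        · rw [h', hψ2]; exact Ne.symm p6
      · rw [hψ1]
        rcases (hmem1 qq).mp hpq with h' | h'
        · rw [h', hψf v₁ hv1S]; exact p3
        · rw [h', hψ0]; exact p4
      · rw [hψ2]
        rcases (hmem2 qq).mp hpq with h' | h'
        · rw [h', hψf v₂ hv2S]; exact p5
        · rw [h', hψ0]; exact p6
    intro p qq hpq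
    by_cases hpS : p ∈ S
    · exact hone p qq hpq hpS
    by_cases hqS : qq ∈ S
    · exact (hone qq p hpq.symm hqS).symm
    · rw [hψf p hpS, hψf qq hqS]
      exact hφp p qq ((hG'adj p qq).mpr ⟨hpq, hpS, hqS⟩)
  refine ⟨ψ, hψprop, ?_⟩
  intro v hvne
  by_cases e0 : v = u₀
  · subst e0
    obtain ⟨c, hc⟩ := hu0odd
    exact ⟨c, by rw [hccu0 c]; exact Nat.odd_iff.mpr hc⟩
  by_cases e1 : v = u₁
  · subst e1
    refine ⟨φ v₁, ?_⟩
    rw [hccu1 (φ v₁), if_pos rfl, if_neg p1]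
    norm_num
  by_cases e2 : v = u₂
  · subst e2
    refine ⟨φ v₂, ?_⟩
    rw [hccu2 (φ v₂), if_pos rfl, if_neg p2]
    norm_num
  by_cases ev1 : v = v₁
  · rw [ev1]
    rcases hv1odd with hoddD | ⟨c, hc⟩
    · -- v₁ has odd degree: automatic
      have hsum : ∑ c : Fin 4, colorCount G ψ v₁ c = gdeg G v₁ := by
        simp only [hCC, hGD, Finset.card_filter]
        rw [Finset.sum_comm]
        refine Finset.sum_congr rfl fun u _ => ?_
        by_cases hA : G.Adj v₁ u
        · simp [hA, Finset.sum_ite_eq]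
        · simp [hA]
      by_contra hno
      simp only [OddAt, not_exists] at hno
      have heven : ∀ c, Even (colorCount G ψ v₁ c) := fun c =>
        Nat.not_odd_iff_even.mp (hno c)
      have hev : Even (gdeg G v₁) := by
        rw [← hsum]; exact Finset.even_sum _ fun c _ => heven c
      exact (Nat.not_odd_iff_even.mpr hev) hoddD
    · refine ⟨c, ?_⟩
      rw [hccv1 c, Nat.odd_iff]
      omega
  by_cases ev2 : v = v₂
  · rw [ev2]
    obtain ⟨c, hc⟩ := hv2odd
    refine ⟨c, ?_⟩
    rw [hccv2 c, Nat.odd_iff]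
    have hpar : colorCount G' φ v₂ c % 2 = (cond (q c) 1 0 : ℕ) % 2 := by
      cases hqc : q c with
      | false =>
        have h2 := hqiff c
        rw [hqc] at h2
        simp only [Bool.false_eq_true, false_iff] at h2
        simp only [Bool.cond_false]
        omega
      | true =>
        have h2 := (hqiff c).mp hqc
        simp only [Bool.cond_true]
        omega
    omega
  · -- generic vertex
    have hvS : v ∉ S := by rw [hSmem]; push_neg; exact ⟨e0, e1, e2⟩
    have hnadj0 : ¬ G.Adj v u₀ := by
      intro hA
      rcases (hmem0 v).mp hA.symm with rfl | rfl | rfl | rfl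
      exacts [ev1 rfl, ev2 rfl, e1 rfl, e2 rfl]
    have hnadj1 : ¬ G.Adj v u₁ := by
      intro hA
      rcases (hmem1 v).mp hA.symm with rfl | rfl
      exacts [ev1 rfl, e0 rfl]
    have hnadj2 : ¬ G.Adj v u₂ := by
      intro hA
      rcases (hmem2 v).mp hA.symm with rfl | rfl
      exacts [ev2 rfl, e0 rfl]
    have hcc : ∀ c, colorCount G ψ v c = colorCount G' φ v c := by
      intro c
      rw [hsplit v hvS c]
      simp [hnadj0, hnadj1, hnadj2]
    obtain ⟨u, hu⟩ := hvne
    have huS : u ∉ S := by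
      rw [hSmem]; push_neg
      exact ⟨fun hh => hnadj0 (hh ▸ hu), fun hh => hnadj1 (hh ▸ hu), fun hh => hnadj2 (hh ▸ hu)⟩
    obtain ⟨c, hc⟩ := hφo v ⟨u, (hG'adj v u).mpr ⟨hu, hvS, huS⟩⟩
    exact ⟨c, by rw [hcc c]; exact hc⟩
end
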